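/- arXiv:1312.0813 — 13 statements merged into one kernel-verified Lean document; each statement's English description precedes it below -/
import Mathlib

section
/- Let H be the 3-uniform hypergraph with vertex set [n]×[n] and edges {ab, ac, db} for a,b,c,d ∈ [n] with c > b and d > a (where xy denotes the pair (x,y)). Then the independence number of H is less than 2n. -/
/-!
Send a point `(a, b)` of an independent set `S` to its column `b` if some point of `S` lies to its
right in row `a`, and to its row `a` otherwise. Rows are hit at most once (by their last point),
and columns at most once, since two such points `(a, b)`, `(d, b)` with `a < d` would span the
edge `{(a, b), (a, c), (d, b)}`. The column of the lexicographically greatest point of `S` is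
never hit, so `|S| ≤ 2n - 1`.
-/

section

variable {α β : Type*} [LinearOrder α] [LinearOrder β]

def IsLShapeFree (S : Finset (α × β)) : Prop :=
  ∀ a b c d, b < c → a < d → (a, b) ∈ S → (a, c) ∈ S → (d, b) ∉ S

def HasRightNeighbour (S : Finset (α × β)) (q : α × β) : Prop :=
  ∃ c, q.2 < c ∧ (q.1, c) ∈ S

open Classical in
noncomputable def rowOrColumn (S : Finset (α × β)) (q : α × β) : α ⊕ β :=
  if HasRightNeighbour S q then .inr q.2 else .inl q.1

variable {S : Finset (α × β)}

theorem IsLShapeFree.rowOrColumn_injOn (hS : IsLShapeFree S) : Set.InjOn (rowOrColumn S) S := by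
  rintro ⟨a, b⟩ hab ⟨d, e⟩ hde heq
  unfold rowOrColumn at heq
  split_ifs at heq with h₁ h₂ h₂
  · obtain rfl : b = e := Sum.inr_injective heq
    obtain ⟨c, hbc, hac⟩ := h₁
    obtain ⟨c', hbc', hdc'⟩ := h₂
    rcases lt_trichotomy a d with had | rfl | hda
    · exact (hS a b c d hbc had hab hac hde).elim
    · rfl
    · exact (hS d b c' a hbc' hda hde hdc' hab).elim
  · obtain rfl : a = d := Sum.inl_injective heq
    rcases lt_trichotomy b e with hbe | rfl | heb
    · exact (h₁ ⟨e, hbe, hde⟩).elim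
    · rfl
    · exact (h₂ ⟨b, heb, hab⟩).elim

theorem IsLShapeFree.rowOrColumn_ne_inr_of_lex_max (hS : IsLShapeFree S) {p : α × β} (hp : p ∈ S)
    (hmax : ∀ q ∈ S, toLex q ≤ toLex p) {q : α × β} (hq : q ∈ S) :
    rowOrColumn S q ≠ .inr p.2 := by
  unfold rowOrColumn
  split_ifs with h
  · obtain ⟨c, hbc, hac⟩ := h
    intro heq
    have hq₂ : q.2 = p.2 := Sum.inr_injective heq
    rcases Prod.Lex.le_iff.mp (hmax q hq) with hlt | ⟨hq₁, -⟩
    · exact hS q.1 q.2 c p.1 hbc hlt hq hac (hq₂ ▸ hp)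
    · rcases Prod.Lex.le_iff.mp (hmax _ hac) with hlt | ⟨-, hcp⟩
      · exact hlt.ne hq₁
      · exact (hcp.trans_lt (hq₂ ▸ hbc)).false
  · exact Sum.inl_ne_inr

theorem IsLShapeFree.card_lt_card_add_card [Fintype α] [Fintype β] (hS : IsLShapeFree S)
    (hne : S.Nonempty) : S.card < Fintype.card α + Fintype.card β := by
  obtain ⟨p, hp, hmax⟩ := S.exists_max_image toLex hne
  calc S.card ≤ (Finset.univ.erase (.inr p.2 : α ⊕ β)).card :=
        Finset.card_le_card_of_injOn (rowOrColumn S)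
          (fun q hq ↦ Finset.mem_erase.mpr
            ⟨hS.rowOrColumn_ne_inr_of_lex_max hp hmax hq, Finset.mem_univ _⟩)
          hS.rowOrColumn_injOn
    _ < Fintype.card (α ⊕ β) := Finset.card_erase_lt_of_mem (Finset.mem_univ _)
    _ = Fintype.card α + Fintype.card β := Fintype.card_sum

end

/-- The 3-uniform hypergraph `H` on `[n] × [n]` with edges `{(a,b),(a,c),(d,b)}`
for `c > b`, `d > a` has independence number less than `2n`: every set `S` of
vertices containing no edge of `H` has fewer than `2n` elements. -/
theorem stmt1 (n : ℕ) (hn : 2 ≤ n) (S : Finset (Fin n × Fin n))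
    (hind : ¬ ∃ a b c d : Fin n, b < c ∧ a < d ∧
      (a, b) ∈ S ∧ (a, c) ∈ S ∧ (d, b) ∈ S) :
    S.card < 2 * n := by
  have hS : IsLShapeFree S := fun a b c d hbc had hab hac hdb ↦
    hind ⟨a, b, c, d, hbc, had, hab, hac, hdb⟩
  rcases S.eq_empty_or_nonempty with rfl | hne
  · simp only [Finset.card_empty]
    omega
  · simpa [two_mul] using hS.card_lt_card_add_card hne
end

section
/- Let H be the 3-uniform hypergraph with vertex set [n]×[n] and edges {(a,b),(a,c),(d,b)} with c > b and d > a. Then H contains no copy of K_4^{-(3)}, the 3-uniform hypergraph on 4 vertices with 3 edges. -/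
/-- The edge predicate of the hypergraph `H` on `[n] × [n]`:
`e` is an edge iff `e = {(a,b),(a,c),(d,b)}` for some `b < c` and `a < d`. -/
def IsEdge (n : ℕ) (e : Finset (Fin n × Fin n)) : Prop :=
  ∃ a b c d : Fin n, b < c ∧ a < d ∧ e = {(a, b), (a, c), (d, b)}

private lemma key {α : Type*} [DecidableEq α] {x y z p q r : α}
    (hpq : p ≠ q) (hpr : p ≠ r) (hqr : q ≠ r)
    (h : ({x, y, z} : Finset α) = {p, q, r}) :
    (x = p ∧ y = q ∧ z = r) ∨ (x = p ∧ y = r ∧ z = q) ∨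
    (x = q ∧ y = p ∧ z = r) ∨ (x = q ∧ y = r ∧ z = p) ∨
    (x = r ∧ y = p ∧ z = q) ∨ (x = r ∧ y = q ∧ z = p) := by
  have hx : x = p ∨ x = q ∨ x = r := by
    have : x ∈ ({p, q, r} : Finset α) := h ▸ (by simp)
    simpa using this
  have hy : y = p ∨ y = q ∨ y = r := by
    have : y ∈ ({p, q, r} : Finset α) := h ▸ (by simp)
    simpa using this
  have hz : z = p ∨ z = q ∨ z = r := by
    have : z ∈ ({p, q, r} : Finset α) := h ▸ (by simp)
    simpa using this
  have hp : p = x ∨ p = y ∨ p = z := by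
    have : p ∈ ({x, y, z} : Finset α) := h.symm ▸ (by simp)
    simpa using this
  have hq : q = x ∨ q = y ∨ q = z := by
    have : q ∈ ({x, y, z} : Finset α) := h.symm ▸ (by simp)
    simpa using this
  have hr : r = x ∨ r = y ∨ r = z := by
    have : r ∈ ({x, y, z} : Finset α) := h.symm ▸ (by simp)
    simpa using this
  rcases hx with hx|hx|hx <;> rcases hy with hy|hy|hy <;> rcases hz with hz|hz|hz <;>
    subst hx <;> subst hy <;> subst hz <;> simp_all <;> tauto

/-- `u` is the corner, `v` its column partner, `w` its row partner. -/
private def C {n : ℕ} (u v w : Fin n × Fin n) : Prop :=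
  u.1.val = v.1.val ∧ u.2.val < v.2.val ∧ u.2.val = w.2.val ∧ u.1.val < w.1.val

private lemma corner_of_isEdge {n : ℕ} {u v w : Fin n × Fin n}
    (h : IsEdge n {u, v, w}) :
    C u v w ∨ C u w v ∨ C v u w ∨ C v w u ∨ C w u v ∨ C w v u := by
  obtain ⟨a, b, c, d, hbc, had, he⟩ := h
  have hpq : ((a, b) : Fin n × Fin n) ≠ (a, c) :=
    fun h' => Fin.ne_of_lt hbc (congrArg Prod.snd h')
  have hpr : ((a, b) : Fin n × Fin n) ≠ (d, b) :=
    fun h' => Fin.ne_of_lt had (congrArg Prod.fst h')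
  have hqr : ((a, c) : Fin n × Fin n) ≠ (d, b) :=
    fun h' => Fin.ne_of_lt had (congrArg Prod.fst h')
  have := key hpq hpr hqr he
  have hC1 : C (a, b) (a, c) (d, b) := ⟨rfl, hbc, rfl, had⟩
  rcases this with ⟨h1, h2, h3⟩|⟨h1, h2, h3⟩|⟨h1, h2, h3⟩|⟨h1, h2, h3⟩|⟨h1, h2, h3⟩|⟨h1, h2, h3⟩ <;>
    subst h1 <;> subst h2 <;> subst h3
  · exact Or.inl hC1
  · exact Or.inr (Or.inl hC1)
  · exact Or.inr (Or.inr (Or.inl hC1))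
  · exact Or.inr (Or.inr (Or.inr (Or.inr (Or.inl hC1))))
  · exact Or.inr (Or.inr (Or.inr (Or.inl hC1)))
  · exact Or.inr (Or.inr (Or.inr (Or.inr (Or.inr hC1))))

/-- `H` contains no copy of `K₄⁻⁽³⁾`, the 3-uniform hypergraph on 4 vertices with
edges `{1,2,3}, {1,2,4}, {1,3,4}`. -/
theorem stmt2 (n : ℕ) :
    ¬ ∃ f : Fin 4 → Fin n × Fin n, Function.Injective f ∧
      IsEdge n {f 0, f 1, f 2} ∧ IsEdge n {f 0, f 1, f 3} ∧ IsEdge n {f 0, f 2, f 3} := by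
  rintro ⟨f, hf, h1, h2, h3⟩
  have c1 := corner_of_isEdge h1
  have c2 := corner_of_isEdge h2
  have c3 := corner_of_isEdge h3
  simp only [C] at c1 c2 c3
  rcases c1 with ⟨a1,a2,a3,a4⟩|⟨a1,a2,a3,a4⟩|⟨a1,a2,a3,a4⟩|⟨a1,a2,a3,a4⟩|⟨a1,a2,a3,a4⟩|⟨a1,a2,a3,a4⟩ <;>
  rcases c2 with ⟨b1,b2,b3,b4⟩|⟨b1,b2,b3,b4⟩|⟨b1,b2,b3,b4⟩|⟨b1,b2,b3,b4⟩|⟨b1,b2,b3,b4⟩|⟨b1,b2,b3,b4⟩ <;>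
  rcases c3 with ⟨d1,d2,d3,d4⟩|⟨d1,d2,d3,d4⟩|⟨d1,d2,d3,d4⟩|⟨d1,d2,d3,d4⟩|⟨d1,d2,d3,d4⟩|⟨d1,d2,d3,d4⟩ <;>
    omega
end

section
/- Let H be the 3-uniform hypergraph with vertex set [n]×[n] and edges {(a,b),(a,c),(d,b)} with c > b, d > a. For each vertex v, the link graph L_v = {{u,w} : {u,v,w} ∈ H} contains no triangle. -/
/-- `Lk v1 v2 u1 u2 w1 w2` records the possible coordinate configurations of an
edge `{u, w}` of the link graph of `v`. -/
def Lk (v1 v2 u1 u2 w1 w2 : ℕ) : Prop :=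
  (u1 = v1 ∧ v2 < u2 ∧ w2 = v2 ∧ v1 < w1) ∨
  (u1 = v1 ∧ u2 < v2 ∧ w2 = u2 ∧ v1 < w1) ∨
  (u2 = v2 ∧ u1 < v1 ∧ w1 = u1 ∧ u2 < w2)

lemma key_s4 (n : ℕ) (v u w : Fin n × Fin n) (h : IsEdge n {v, u, w}) :
    Lk v.1.1 v.2.1 u.1.1 u.2.1 w.1.1 w.2.1 ∨ Lk v.1.1 v.2.1 w.1.1 w.2.1 u.1.1 u.2.1 := by
  obtain ⟨a, b, c, d, hbc, had, he⟩ := h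
  rw [Fin.lt_def] at hbc had
  have hAB : ((a, b) : Fin n × Fin n) ≠ (a, c) := by
    simp [Prod.ext_iff, Fin.ext_iff]; omega
  have hAC : ((a, b) : Fin n × Fin n) ≠ (d, b) := by
    simp [Prod.ext_iff, Fin.ext_iff]; omega
  have hBC : ((a, c) : Fin n × Fin n) ≠ (d, b) := by
    simp [Prod.ext_iff, Fin.ext_iff]; omega
  have h3 : ({v, u, w} : Finset (Fin n × Fin n)).card = 3 := by
    rw [he]; exact Finset.card_eq_three.mpr ⟨_, _, _, hAB, hAC, hBC, rfl⟩
  have hle : ∀ (x y : Fin n × Fin n), ({x, y} : Finset (Fin n × Fin n)).card ≤ 2 :=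
    fun x y => (Finset.card_insert_le _ _).trans (by simp)
  have hvu : v ≠ u := by
    rintro rfl
    rw [Finset.insert_idem] at h3
    have := hle v w; omega
  have hvw : v ≠ w := by
    rintro rfl
    have hE : ({v, u, v} : Finset (Fin n × Fin n)) = {v, u} := by
      ext z; simp; tauto
    rw [hE] at h3
    have := hle v u; omega
  have huw : u ≠ w := by
    rintro rfl
    have : ({v, u, u} : Finset (Fin n × Fin n)) = {v, u} := by
      simp
    rw [this] at h3
    have := hle v u; omega
  have hv : v = (a, b) ∨ v = (a, c) ∨ v = (d, b) := by
    have : v ∈ ({(a, b), (a, c), (d, b)} : Finset (Fin n × Fin n)) := he ▸ (by simp)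
    simpa using this
  have hu : u = (a, b) ∨ u = (a, c) ∨ u = (d, b) := by
    have : u ∈ ({(a, b), (a, c), (d, b)} : Finset (Fin n × Fin n)) := he ▸ (by simp)
    simpa using this
  have hw : w = (a, b) ∨ w = (a, c) ∨ w = (d, b) := by
    have : w ∈ ({(a, b), (a, c), (d, b)} : Finset (Fin n × Fin n)) := he ▸ (by simp)
    simpa using this
  rcases hv with rfl | rfl | rfl <;> rcases hu with rfl | rfl | rfl <;>
    rcases hw with rfl | rfl | rfl <;>
    simp_all [Lk, Prod.ext_iff, Fin.ext_iff] <;> omega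

/-- For each vertex `v` of `H`, the link graph `L_v = {{u,w} : {u,v,w} ∈ H}` contains
no triangle. -/
theorem stmt4 (n : ℕ) :
    ¬ ∃ v u w x : Fin n × Fin n, u ≠ w ∧ w ≠ x ∧ u ≠ x ∧
      IsEdge n {v, u, w} ∧ IsEdge n {v, w, x} ∧ IsEdge n {v, u, x} := by
  rintro ⟨v, u, w, x, huw, hwx, hux, h1, h2, h3⟩
  have k1 := key_s4 n v u w h1
  have k2 := key_s4 n v w x h2
  have k3 := key_s4 n v u x h3
  simp only [Lk] at k1 k2 k3
  rcases k1 with (h | h | h) | (h | h | h) <;>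
    rcases k2 with (g | g | g) | (g | g | g) <;>
      rcases k3 with (f | f | f) | (f | f | f) <;> omega
end

section
/- Let H be the 3-uniform hypergraph with vertex set [n]×[n] and edges {(a,b),(a,c),(d,b)} with c > b, d > a. Then H contains no copy of the tight path P_4, the 3-uniform hypergraph on vertices 1,...,6 with edges {i,i+1,i+2} for i=1,...,4. -/
def Corner3 {n : ℕ} (u v w : Fin n × Fin n) : Prop :=
  u.1.val = v.1.val ∧ u.2.val = w.2.val ∧ u.2.val < v.2.val ∧ u.1.val < w.1.val

lemma edge_cases {n : ℕ} (p q r : Fin n × Fin n) (hpq : p ≠ q) (hpr : p ≠ r) (hqr : q ≠ r)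
    (h : IsEdge n {p, q, r}) :
    Corner3 p q r ∨ Corner3 p r q ∨ Corner3 q p r ∨ Corner3 q r p ∨
      Corner3 r p q ∨ Corner3 r q p := by
  obtain ⟨a, b, c, d, hbc, had, hs⟩ := h
  have hbc' : b.val < c.val := hbc
  have had' : a.val < d.val := had
  have hp : p = (a, b) ∨ p = (a, c) ∨ p = (d, b) := by
    have : p ∈ ({(a, b), (a, c), (d, b)} : Finset _) := hs ▸ (by simp)
    simpa using this
  have hq : q = (a, b) ∨ q = (a, c) ∨ q = (d, b) := by
    have : q ∈ ({(a, b), (a, c), (d, b)} : Finset _) := hs ▸ (by simp)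
    simpa using this
  have hr : r = (a, b) ∨ r = (a, c) ∨ r = (d, b) := by
    have : r ∈ ({(a, b), (a, c), (d, b)} : Finset _) := hs ▸ (by simp)
    simpa using this
  rcases hp with rfl | rfl | rfl <;> rcases hq with rfl | rfl | rfl <;>
    rcases hr with rfl | rfl | rfl <;> simp_all [Corner3]

/-- `H` contains no copy of the tight path `P₄`: there is no injective map `f` from
`{0,…,5}` to vertices of `H` with `{f i, f (i+1), f (i+2)}` an edge for `i = 0,…,3`. -/
theorem stmt5 (n : ℕ) :
    ¬ ∃ f : ℕ → Fin n × Fin n, Set.InjOn f (Set.Iio 6) ∧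
      ∀ i < 4, IsEdge n {f i, f (i + 1), f (i + 2)} := by
  rintro ⟨f, hinj, he⟩
  have hne : ∀ i j : ℕ, i < 6 → j < 6 → i ≠ j → f i ≠ f j := fun i j hi hj hij h =>
    hij (hinj hi hj h)
  have key : ∀ i j : ℕ, i < 6 → j < 6 → i ≠ j →
      (f i).1.val ≠ (f j).1.val ∨ (f i).2.val ≠ (f j).2.val := by
    intro i j hi hj hij
    by_contra hc
    push_neg at hc
    exact hne i j hi hj hij (Prod.ext (Fin.val_injective hc.1) (Fin.val_injective hc.2))
  have h0 := edge_cases (f 0) (f 1) (f 2)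
    (hne 0 1 (by norm_num) (by norm_num) (by norm_num))
    (hne 0 2 (by norm_num) (by norm_num) (by norm_num))
    (hne 1 2 (by norm_num) (by norm_num) (by norm_num)) (he 0 (by norm_num))
  have h1 := edge_cases (f 1) (f 2) (f 3)
    (hne 1 2 (by norm_num) (by norm_num) (by norm_num))
    (hne 1 3 (by norm_num) (by norm_num) (by norm_num))
    (hne 2 3 (by norm_num) (by norm_num) (by norm_num)) (he 1 (by norm_num))
  have h2 := edge_cases (f 2) (f 3) (f 4)
    (hne 2 3 (by norm_num) (by norm_num) (by norm_num))
    (hne 2 4 (by norm_num) (by norm_num) (by norm_num))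
    (hne 3 4 (by norm_num) (by norm_num) (by norm_num)) (he 2 (by norm_num))
  have h3 := edge_cases (f 3) (f 4) (f 5)
    (hne 3 4 (by norm_num) (by norm_num) (by norm_num))
    (hne 3 5 (by norm_num) (by norm_num) (by norm_num))
    (hne 4 5 (by norm_num) (by norm_num) (by norm_num)) (he 3 (by norm_num))
  have k05 := key 0 5 (by norm_num) (by norm_num) (by norm_num)
  have k04 := key 0 4 (by norm_num) (by norm_num) (by norm_num)
  have k03 := key 0 3 (by norm_num) (by norm_num) (by norm_num)
  have k14 := key 1 4 (by norm_num) (by norm_num) (by norm_num)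
  have k15 := key 1 5 (by norm_num) (by norm_num) (by norm_num)
  have k25 := key 2 5 (by norm_num) (by norm_num) (by norm_num)
  have k02 := key 0 2 (by norm_num) (by norm_num) (by norm_num)
  have k13 := key 1 3 (by norm_num) (by norm_num) (by norm_num)
  have k24 := key 2 4 (by norm_num) (by norm_num) (by norm_num)
  have k35 := key 3 5 (by norm_num) (by norm_num) (by norm_num)
  have k01 := key 0 1 (by norm_num) (by norm_num) (by norm_num)
  have k12 := key 1 2 (by norm_num) (by norm_num) (by norm_num)
  have k23 := key 2 3 (by norm_num) (by norm_num) (by norm_num)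
  have k34 := key 3 4 (by norm_num) (by norm_num) (by norm_num)
  have k45 := key 4 5 (by norm_num) (by norm_num) (by norm_num)
  unfold Corner3 at h0 h1 h2 h3
  rcases h1 with h1 | h1 | h1 | h1 | h1 | h1 <;>
    rcases h2 with h2 | h2 | h2 | h2 | h2 | h2 <;>
    rcases h0 with h0 | h0 | h0 | h0 | h0 | h0 <;>
    rcases h3 with h3 | h3 | h3 | h3 | h3 | h3 <;>
    omega
end

section
/- For every 3-uniform hypergraph H on N vertices with average degree d ≤ N and with ex-type bound: if H contains no tight path P_s (s fixed), then the number of edges of H is O_s(N^2); consequently r(P_s, t) = O_s(t^2). -/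
/-!
If every pair of vertices lying in an edge lies in at least `s + 2` edges, a tight path can be
grown greedily: its last two vertices lie in an edge, so they have more common neighbours than the
`≤ s + 1` vertices already used, and any unused one extends the path. Hence a `P_s`-free
hypergraph always has a pair in its shadow of codegree at most `s + 1`; deleting all edges
through it removes at most `s + 1` edges and at least one pair from the shadow. Iterating,
`|H| ≤ (s + 1) · |∂H| ≤ (s + 1) · n²`.
-/

open Finset
open scoped FinsetFamily

variable {α : Type*}

theorem Set.InjOn.update_Iio_add_one {f : ℕ → α} {m : ℕ} {w : α}
    (hf : Set.InjOn f (Set.Iio m)) (hw : w ∉ f '' Set.Iio m) :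
    Set.InjOn (Function.update f m w) (Set.Iio (m + 1)) := by
  have hfg : Set.EqOn (Function.update f m w) f (Set.Iio m) := fun j hj =>
    Function.update_of_ne (ne_of_lt hj) _ _
  rw [Set.Iio_add_one_eq_Iic, ← Set.Iio_insert, Set.injOn_insert Set.self_notMem_Iio,
    hfg.image_eq, Function.update_self]
  exact ⟨hf.congr hfg.symm, hw⟩

variable [DecidableEq α]

def IsTightPath (H : Finset (Finset α)) (k : ℕ) (f : ℕ → α) : Prop :=
  Set.InjOn f (Set.Iio (k + 2)) ∧ ∀ i < k, {f i, f (i + 1), f (i + 2)} ∈ H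

theorem IsTightPath.mono {H K : Finset (Finset α)} {k : ℕ} {f : ℕ → α} (hHK : H ⊆ K)
    (hf : IsTightPath H k f) : IsTightPath K k f :=
  ⟨hf.1, fun i hi => hHK (hf.2 i hi)⟩

theorem IsTightPath.extend {H : Finset (Finset α)} {k : ℕ} {f : ℕ → α} {w : α}
    (hf : IsTightPath H k f) (hw : w ∉ f '' Set.Iio (k + 2)) (hedge : {f k, f (k + 1), w} ∈ H) :
    IsTightPath H (k + 1) (Function.update f (k + 2) w) := by
  have hfg : ∀ j < k + 2, Function.update f (k + 2) w j = f j := fun j hj =>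
    Function.update_of_ne (by omega) _ _
  refine ⟨hf.1.update_Iio_add_one hw, fun i hi => ?_⟩
  rcases Nat.lt_succ_iff_lt_or_eq.1 hi with hi | rfl
  · rw [hfg i (by omega), hfg (i + 1) (by omega), hfg (i + 2) (by omega)]
    exact hf.2 i hi
  · rwa [hfg i (by omega), hfg (i + 1) (by omega), Function.update_self]

theorem exists_notMem_insert_mem_of_card_lt {H : Finset (Finset α)} {p F : Finset α}
    (hH : (H : Set (Finset α)).Sized (#p + 1)) (hF : #F < #{e ∈ H | p ⊆ e}) :
    ∃ w ∉ F, insert w p ∈ H := by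
  by_contra! hnew
  have hsub : {e ∈ H | p ⊆ e} ⊆ F.image (insert · p) := by
    intro e he
    rw [mem_filter] at he
    obtain ⟨w, -, rfl⟩ := exists_eq_insert_iff.2 ⟨he.2, (hH he.1).symm⟩
    exact mem_image_of_mem _ (by_contra fun hw => hnew w hw he.1)
  have := (card_le_card hsub).trans card_image_le
  omega

theorem exists_isTightPath_of_le_codegree {H : Finset (Finset α)} {s : ℕ}
    (hH : (H : Set (Finset α)).Sized 3) (hcod : ∀ p ∈ ∂ H, s + 2 ≤ #{e ∈ H | p ⊆ e})
    {a b : α} (hab : a ≠ b) (habH : {a, b} ∈ ∂ H) :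
    ∀ k ≤ s, ∃ f, IsTightPath H k f ∧ {f k, f (k + 1)} ∈ ∂ H := by
  intro k
  induction k with
  | zero =>
    intro _
    refine ⟨fun i => if i = 0 then a else b,
      ⟨?_, fun i hi => absurd hi (Nat.not_lt_zero i)⟩, habH⟩
    intro i hi j hj hij
    simp only [Set.mem_Iio] at hi hj
    interval_cases i <;> interval_cases j <;> simp_all
  | succ k ih =>
    intro hk
    obtain ⟨f, hf, hlast⟩ := ih (by omega)
    have hF : #((range (k + 2)).image f) < #{e ∈ H | {f k, f (k + 1)} ⊆ e} :=
      (card_image_le.trans_lt (by rw [card_range]; omega)).trans_le (hcod _ hlast)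
    obtain ⟨w, hwF, hwH⟩ := exists_notMem_insert_mem_of_card_lt (by rwa [hH.shadow hlast]) hF
    rw [← mem_coe, coe_image, coe_range] at hwF
    have hedge : {f k, f (k + 1), w} ∈ H := by rwa [insert_comm, pair_comm] at hwH
    have hfk : f k ∉ ({f (k + 1), w} : Finset α) := by
      simp only [mem_insert, mem_singleton, not_or]
      refine ⟨fun h => by have := hf.1 (by simp) (by simp) h; omega, ?_⟩
      rintro rfl
      exact hwF ⟨k, by simp, rfl⟩
    refine ⟨_, hf.extend hwF hedge, ?_⟩
    rw [Function.update_of_ne (by omega), Function.update_self, ← erase_insert hfk]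
    exact erase_mem_shadow hedge (mem_insert_self _ _)

theorem exists_mem_shadow_codegree_le {H : Finset (Finset α)} {s : ℕ}
    (hH : (H : Set (Finset α)).Sized 3) (hne : H.Nonempty)
    (hfree : ¬ ∃ f, IsTightPath H s f) : ∃ p ∈ ∂ H, #{e ∈ H | p ⊆ e} ≤ s + 1 := by
  by_contra! hcod
  obtain ⟨e, he⟩ := hne
  obtain ⟨a, ha⟩ := card_pos.1 (by rw [hH he]; omega : 0 < #e)
  have hpair := erase_mem_shadow he ha
  obtain ⟨x, y, hxy, hp⟩ := card_eq_two.1 (hH.shadow hpair)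
  rw [hp] at hpair
  obtain ⟨f, hf, -⟩ := exists_isTightPath_of_le_codegree hH hcod hxy hpair s le_rfl
  exact hfree ⟨f, hf⟩

theorem notMem_shadow_filter_not_subset (H : Finset (Finset α)) (p : Finset α) :
    p ∉ ∂ {e ∈ H | ¬ p ⊆ e} := fun hp =>
  let ⟨_, he, hpe⟩ := exists_subset_of_mem_shadow hp
  (mem_filter.1 he).2 hpe

theorem card_le_mul_card_shadow_of_codegree_le {m : ℕ} {H : Finset (Finset α)}
    (hcod : ∀ H' ⊆ H, H'.Nonempty → ∃ p ∈ ∂ H', #{e ∈ H' | p ⊆ e} ≤ m) :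
    #H ≤ m * #(∂ H) := by
  induction H using Finset.strongInduction with
  | H H ih =>
    obtain rfl | hne := H.eq_empty_or_nonempty
    · simp
    obtain ⟨p, hp, hpm⟩ := hcod H subset_rfl hne
    set H' := {e ∈ H | ¬ p ⊆ e}
    have hH' : H' ⊂ H := filter_ssubset.2 <| by simpa using exists_subset_of_mem_shadow hp
    have hshadow : #(∂ H') < #(∂ H) :=
      card_lt_card <| (ssubset_iff_of_subset (shadow_mono (filter_subset _ _))).2
        ⟨p, hp, notMem_shadow_filter_not_subset H p⟩
    have ih' := ih H' hH' fun K hK => hcod K (hK.trans hH'.subset)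
    calc #H = #{e ∈ H | p ⊆ e} + #H' := (card_filter_add_card_filter_not _).symm
      _ ≤ m + m * #(∂ H') := add_le_add hpm ih'
      _ = m * (#(∂ H') + 1) := by ring
      _ ≤ m * #(∂ H) := Nat.mul_le_mul_left _ hshadow

theorem stmt6_general (s : ℕ) :
    ∃ c : ℕ, ∀ (n : ℕ) (H : Finset (Finset (Fin n))),
      (∀ e ∈ H, e.card = 3) →
      (¬ ∃ f : ℕ → Fin n, Set.InjOn f (Set.Iio (s + 2)) ∧
        ∀ i < s, ({f i, f (i + 1), f (i + 2)} : Finset (Fin n)) ∈ H) →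
      H.card ≤ c * n ^ 2 := by
  refine ⟨s + 1, fun n H h3 hfree => ?_⟩
  have hH : (H : Set (Finset (Fin n))).Sized 3 := fun e he => h3 e he
  calc #H ≤ (s + 1) * #(∂ H) :=
        card_le_mul_card_shadow_of_codegree_le fun H' hH' hne =>
          exists_mem_shadow_codegree_le (hH.mono (coe_subset.2 hH')) hne
            fun ⟨f, hf⟩ => hfree ⟨f, hf.mono hH'⟩
    _ ≤ (s + 1) * n ^ 2 := by
        gcongr
        simpa using hH.shadow.card_le.trans (Nat.choose_le_pow _ _)

/-- Turán-type bound: for fixed `s ≥ 1` there is a constant `c` such that every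
3-uniform hypergraph on `n` vertices containing no tight path `P_s`
(vertices `{0,…,s+1}`, edges `{i,i+1,i+2}` for `i < s`) has at most `c·n²` edges. -/
theorem stmt6 (s : ℕ) (hs : 1 ≤ s) :
    ∃ c : ℕ, ∀ (n : ℕ) (H : Finset (Finset (Fin n))),
      (∀ e ∈ H, e.card = 3) →
      (¬ ∃ f : ℕ → Fin n, Set.InjOn f (Set.Iio (s + 2)) ∧
        ∀ i < s, ({f i, f (i + 1), f (i + 2)} : Finset (Fin n)) ∈ H) →
      H.card ≤ c * n ^ 2 :=
  stmt6_general s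
end

section
/- Fix k ≥ 2. Every k-partite k-uniform hypergraph with parts X_1,...,X_k each a copy of [n], containing no positive strong k-simplex, has at most 2k·n^{k-1} edges. -/
/-- Every `k`-partite `k`-uniform hypergraph (edges viewed as transversal tuples in
`X₁ × ⋯ × X_k`, each `Xᵢ ≅ [n]`) with no positive strong `k`-simplex — a central edge
`v` together with the `k` edges obtained by replacing the `i`-th coordinate `v i` with
some `w i > v i` — has at most `2k·n^(k-1)` edges. -/
theorem stmt7 (k n : ℕ) (hk : 2 ≤ k) (H : Finset (Fin k → Fin n))
    (hfree : ¬ ∃ v w : Fin k → Fin n, (∀ i, v i < w i) ∧ v ∈ H ∧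
      ∀ i, Function.update v i (w i) ∈ H) :
    H.card ≤ 2 * k * n ^ (k - 1) := by
  classical
  obtain ⟨m, rfl⟩ : ∃ m, k = m + 1 := ⟨k - 1, by omega⟩
  have hex : ∀ v ∈ H, ∃ i : Fin (m+1), ∀ c, v i < c → Function.update v i c ∉ H := by
    intro v hv
    by_contra h
    push_neg at h
    obtain ⟨w, hw⟩ := Classical.axiomOfChoice h
    exact hfree ⟨v, w, fun i => (hw i).1, hv, fun i => (hw i).2⟩
  set φ : (Fin (m+1) → Fin n) → Fin (m+1) := fun v =>
    if h : ∃ i : Fin (m+1), ∀ c, v i < c → Function.update v i c ∉ H then h.choose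
    else ⟨0, by omega⟩ with hφ
  have hspec : ∀ v ∈ H, ∀ c, v (φ v) < c → Function.update v (φ v) c ∉ H := by
    intro v hv
    have h := hex v hv
    simp only [hφ, dif_pos h]
    exact h.choose_spec
  have hinj : Set.InjOn (fun v => (φ v, v ∘ (φ v).succAbove)) (H : Set (Fin (m+1) → Fin n)) := by
    intro v hv v' hv' heq
    simp only [Prod.mk.injEq] at heq
    obtain ⟨hi, hrest⟩ := heq
    rw [← hi] at hrest
    have hoff : ∀ j, j ≠ φ v → v j = v' j := by
      intro j hj
      obtain ⟨m, hm⟩ := Fin.exists_succAbove_eq hj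
      have := congrFun hrest m
      simpa [hm] using this
    have hup : Function.update v (φ v) (v' (φ v)) = v' := by
      funext j
      by_cases hji : j = φ v
      · subst hji; simp
      · simp [Function.update_of_ne hji, hoff j hji]
    have hup' : Function.update v' (φ v') (v (φ v)) = v := by
      funext j
      by_cases hji : j = φ v
      · rw [← hi, hji]; simp
      · rw [← hi]
        simp [Function.update_of_ne hji, hoff j hji]
    have h1 : ¬ v (φ v) < v' (φ v) := by
      intro hlt
      exact hspec v hv _ hlt (by rw [hup]; exact hv')
    have h2 : ¬ v' (φ v) < v (φ v) := by
      intro hlt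
      have hlt' : v' (φ v') < v (φ v) := by rw [← hi]; exact hlt
      exact hspec v' hv' _ hlt' (by rw [hup']; exact hv)
    have heqi : v (φ v) = v' (φ v) := le_antisymm (not_lt.mp h2) (not_lt.mp h1)
    funext j
    by_cases hji : j = φ v
    · subst hji; exact heqi
    · exact hoff j hji
  calc H.card ≤ (Finset.univ : Finset (Fin (m+1) × (Fin m → Fin n))).card :=
        Finset.card_le_card_of_injOn _ (fun _ _ => Finset.mem_univ _) hinj
    _ = (m+1) * n ^ m := by simp
    _ ≤ 2 * (m+1) * n ^ m := by
        have : (m+1) ≤ 2 * (m+1) := by omega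
        exact Nat.mul_le_mul_right _ this
    _ = 2 * (m + 1) * n ^ ((m + 1) - 1) := by norm_num
end

section
/- Base case k = 2 of the positive simplex lemma: every bipartite graph with parts X, Y each a copy of [n] and more than 4n edges contains vertices x < x' in X and y < y' in Y with xy, xy', x'y all edges. -/
/-- Base case `k = 2`: every bipartite graph with parts `X, Y ≅ [n]` and more than
`4n` edges contains `x < x'` and `y < y'` with `xy, xy', x'y` all edges. -/
theorem stmt8 (n : ℕ) (E : Finset (Fin n × Fin n)) (hE : 4 * n < E.card) :
    ∃ x x' y y' : Fin n, x < x' ∧ y < y' ∧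
      (x, y) ∈ E ∧ (x, y') ∈ E ∧ (x', y) ∈ E := by
  by_contra h
  push_neg at h
  set A := E.filter (fun e => ∀ y', e.2 < y' → (e.1, y') ∉ E) with hA
  set B := E.filter (fun e => ∀ x', e.1 < x' → (x', e.2) ∉ E) with hB
  have hsub : E ⊆ A ∪ B := by
    intro e he
    rw [Finset.mem_union]
    by_contra hc
    push_neg at hc
    obtain ⟨h1, h2⟩ := hc
    simp only [hA, hB, Finset.mem_filter, he, true_and, not_forall, not_not] at h1 h2
    obtain ⟨y', hy1, hy2⟩ := h1
    obtain ⟨x', hx1, hx2⟩ := h2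
    exact h e.1 x' e.2 y' hx1 hy1 (by simpa using he) hy2 hx2
  have hAcard : A.card ≤ n := by
    have hinj : Set.InjOn Prod.fst (A : Set (Fin n × Fin n)) := by
      intro e heA e' heA' hfst
      rw [Finset.mem_coe, hA, Finset.mem_filter] at heA heA'
      have : e.2 = e'.2 := by
        rcases lt_trichotomy e.2 e'.2 with hlt | heq | hgt
        · exact absurd (hfst ▸ heA'.1 : (e.1, e'.2) ∈ E) (heA.2 e'.2 hlt)
        · exact heq
        · exact absurd (hfst ▸ heA.1 : (e'.1, e.2) ∈ E) (heA'.2 e.2 hgt)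
      exact Prod.ext hfst this
    calc A.card = (A.image Prod.fst).card := (Finset.card_image_of_injOn hinj).symm
      _ ≤ Fintype.card (Fin n) := Finset.card_le_univ _
      _ = n := Fintype.card_fin n
  have hBcard : B.card ≤ n := by
    have hinj : Set.InjOn Prod.snd (B : Set (Fin n × Fin n)) := by
      intro e heB e' heB' hsnd
      rw [Finset.mem_coe, hB, Finset.mem_filter] at heB heB'
      have : e.1 = e'.1 := by
        rcases lt_trichotomy e.1 e'.1 with hlt | heq | hgt
        · exact absurd (hsnd ▸ heB'.1 : (e'.1, e.2) ∈ E) (heB.2 e'.1 hlt)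
        · exact heq
        · exact absurd (hsnd ▸ heB.1 : (e.1, e'.2) ∈ E) (heB'.2 e.1 hgt)
      exact Prod.ext this hsnd
    calc B.card = (B.image Prod.snd).card := (Finset.card_image_of_injOn hinj).symm
      _ ≤ Fintype.card (Fin n) := Finset.card_le_univ _
      _ = n := Fintype.card_fin n
  have : E.card ≤ 2 * n := by
    calc E.card ≤ (A ∪ B).card := Finset.card_le_card hsub
      _ ≤ A.card + B.card := Finset.card_union_le _ _
      _ ≤ 2 * n := by omega
  omega
end

section
/- Fix k ≥ 2 and let H_k be the (k+1)-uniform hypergraph with vertex set X_1×···×X_k (each X_i ≅ [n]) whose edges are the vertex sets of positive strong k-simplices. Then α(H_k) ≤ 2k·n^{k-1}. -/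
/-- `A` is an edge of `H_k`: the vertex set of a positive strong `k`-simplex, i.e.
a central vertex `v` together with the `k` vertices obtained by increasing one
coordinate. -/
def IsSimplex (k n : ℕ) (A : Finset (Fin k → Fin n)) : Prop :=
  ∃ v w : Fin k → Fin n, (∀ i, v i < w i) ∧
    A = insert v ((Finset.univ : Finset (Fin k)).image fun i => Function.update v i (w i))

/-- The independence number of `H_k` is at most `2k·n^(k-1)`. -/
theorem stmt9 (k n : ℕ) (hk : 2 ≤ k) (S : Finset (Fin k → Fin n))
    (hind : ∀ A, IsSimplex k n A → ¬ A ⊆ S) :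
    S.card ≤ 2 * k * n ^ (k - 1) := by
  classical
  obtain ⟨m, rfl⟩ : ∃ m, k = m + 1 := ⟨k - 1, by omega⟩
  -- Every v ∈ S is the maximum of S along some coordinate direction.
  have key : ∀ v : Fin (m + 1) → Fin n, ∃ i, v ∈ S →
      ∀ c, v i < c → Function.update v i c ∉ S := by
    intro v
    by_cases hv : v ∈ S
    · by_contra h
      push_neg at h
      choose w hw1 hw2 using fun i => (h i).2
      refine hind _ ⟨v, w, hw1, rfl⟩ ?_
      intro x hx
      simp only [Finset.mem_insert, Finset.mem_image, Finset.mem_univ, true_and] at hx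
      rcases hx with rfl | ⟨i, rfl⟩
      · exact hv
      · exact hw2 i
    · exact ⟨0, fun h => absurd h hv⟩
  choose idx hidx using key
  have hcard : S.card = ∑ i : Fin (m + 1), (S.filter fun v => idx v = i).card :=
    Finset.card_eq_sum_card_fiberwise (fun v _ => Finset.mem_univ (idx v))
  have hfib : ∀ i : Fin (m + 1), (S.filter fun v => idx v = i).card ≤ n ^ m := by
    intro i
    have : (S.filter fun v => idx v = i).card ≤
        (Finset.univ : Finset (Fin m → Fin n)).card := by
      apply Finset.card_le_card_of_injOn (fun v => fun j => v (i.succAbove j))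
        (fun _ _ => Finset.mem_univ _)
      intro u hu v hv huv
      simp only [Finset.mem_coe, Finset.mem_filter] at hu hv
      have hoff : ∀ j, j ≠ i → u j = v j := by
        intro j hj
        obtain ⟨j', rfl⟩ := Fin.exists_succAbove_eq hj
        exact congrFun huv j'
      rcases lt_trichotomy (u i) (v i) with h | h | h
      · exfalso
        have : Function.update u i (v i) ∉ S := by
          have := hidx u hu.1; rw [hu.2] at this; exact this (v i) h
        apply this
        have : Function.update u i (v i) = v := by
          funext j
          rcases eq_or_ne j i with rfl | hj
          · simp
          · rw [Function.update_of_ne hj]; exact hoff j hj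
        rw [this]; exact hv.1
      · funext j
        rcases eq_or_ne j i with rfl | hj
        · exact h
        · exact hoff j hj
      · exfalso
        have : Function.update v i (u i) ∉ S := by
          have := hidx v hv.1; rw [hv.2] at this; exact this (u i) h
        apply this
        have : Function.update v i (u i) = u := by
          funext j
          rcases eq_or_ne j i with rfl | hj
          · simp
          · rw [Function.update_of_ne hj]; exact (hoff j hj).symm
        rw [this]; exact hu.1
    simpa [Fintype.card_fun] using this
  calc S.card = ∑ i : Fin (m + 1), (S.filter fun v => idx v = i).card := hcard
    _ ≤ ∑ _i : Fin (m + 1), n ^ m := Finset.sum_le_sum fun i _ => hfib i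
    _ = (m + 1) * n ^ m := by simp [mul_comm]
    _ ≤ 2 * (m + 1) * n ^ (m + 1 - 1) := by
        simp only [Nat.add_sub_cancel]
        nlinarith [Nat.zero_le ((m + 1) * n ^ m)]
end

section
/- Fix k ≥ 2. The hypergraph H_k of positive strong k-simplices contains no copy of T_{k+1}, the (k+1)-uniform hypergraph with k+2 edges e_1,...,e_{k+1}, f where e_i ∩ e_j = S for all i ≠ j with |S| = k, and f ⊇ e_i \ S for every i. -/
lemma exists_ne_fin {k : ℕ} (hk : 2 ≤ k) (c : Fin k) : ∃ j : Fin k, j ≠ c := by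
  haveI : Nontrivial (Fin k) := Fin.nontrivial_iff_two_le.mpr hk
  exact exists_ne c

lemma mem_simplex_iff {k n : ℕ} {v w a : Fin k → Fin n} :
    a ∈ insert v ((Finset.univ : Finset (Fin k)).image fun i => Function.update v i (w i)) ↔
      a = v ∨ ∃ j, a = Function.update v j (w j) := by
  simp [Finset.mem_insert, Finset.mem_image, eq_comm]

lemma simplex_apex_le {k n : ℕ} {v w a : Fin k → Fin n} (hvw : ∀ i, v i < w i)
    (ha : a = v ∨ ∃ j, a = Function.update v j (w j)) : v ≤ a := by
  rcases ha with rfl | ⟨j, rfl⟩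
  · exact le_refl _
  · intro cc
    rcases eq_or_ne cc j with rfl | hcj
    · simpa using (hvw cc).le
    · simp [Function.update_of_ne hcj]

lemma simplex_card {k n : ℕ} {v w : Fin k → Fin n} (hvw : ∀ i, v i < w i) :
    (insert v ((Finset.univ : Finset (Fin k)).image fun i => Function.update v i (w i))).card
      = k + 1 := by
  have hinj : Function.Injective (fun i => Function.update v i (w i)) := by
    intro a b hab
    by_contra hne
    have := congrFun hab a
    simp only [] at this
    rw [Function.update_self, Function.update_of_ne hne] at this
    exact (hvw a).ne' this
  rw [Finset.card_insert_of_notMem, Finset.card_image_of_injective _ hinj,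
    Finset.card_univ, Fintype.card_fin]
  intro hmem
  obtain ⟨i, -, hi⟩ := Finset.mem_image.mp hmem
  have := congrFun hi i
  rw [Function.update_self] at this
  exact (hvw i).ne' this

lemma apex_mem {k n : ℕ} (hk : 2 ≤ k) {v w u w' : Fin k → Fin n}
    (hvw : ∀ i, v i < w i) (huw : ∀ i, u i < w' i)
    (hsub : ∀ j : Fin k, Function.update v j (w j) = u ∨
        ∃ m, Function.update v j (w j) = Function.update u m (w' m)) :
    v = u := by
  have huv : u ≤ v := by
    intro cc
    obtain ⟨j, hj⟩ := exists_ne_fin hk cc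
    have h1 := simplex_apex_le huw (hsub j) cc
    rwa [Function.update_of_ne (Ne.symm hj)] at h1
  have key : ∀ j cc : Fin k, cc ≠ j → v cc = u cc := by
    intro j cc hcj
    have hujlt : u j < w j := lt_of_le_of_lt (huv j) (hvw j)
    rcases hsub j with h | ⟨m, h⟩
    · exfalso
      have := congrFun h j
      rw [Function.update_self] at this
      exact hujlt.ne' this
    · rcases eq_or_ne m j with rfl | hmj
      · have := congrFun h cc
        rwa [Function.update_of_ne hcj, Function.update_of_ne hcj] at this
      · exfalso
        have := congrFun h j
        rw [Function.update_self, Function.update_of_ne (Ne.symm hmj)] at this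
        exact hujlt.ne' this
  funext cc
  obtain ⟨j, hj⟩ := exists_ne_fin hk cc
  exact key j cc (Ne.symm hj)

/-- `H_k` contains no copy of `T_{k+1}`: there are no edges `e₁, …, e_{k+1}, f` of
`H_k` and a `k`-set `S` with `eᵢ ∩ eⱼ = S` for all `i ≠ j` and `f ⊇ eᵢ \ S` for all `i`. -/
theorem stmt11 (k n : ℕ) (hk : 2 ≤ k) :
    ¬ ∃ (e : Fin (k + 1) → Finset (Fin k → Fin n)) (f S : Finset (Fin k → Fin n)),
      (∀ i, IsSimplex k n (e i)) ∧ IsSimplex k n f ∧ S.card = k ∧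
      (∀ i j, i ≠ j → e i ∩ e j = S) ∧ (∀ i, e i \ S ⊆ f) := by
  rintro ⟨e, f, S, he, hf, hS, hint, hsubf⟩
  choose v w hvw hE using he
  obtain ⟨u, w', huw, hF⟩ := hf
  have hmem : ∀ (i) (a), a ∈ e i ↔ a = v i ∨ ∃ j, a = Function.update (v i) j (w i j) := by
    intro i a; rw [hE i]; exact mem_simplex_iff
  have hmemf : ∀ a, a ∈ f ↔ a = u ∨ ∃ j, a = Function.update u j (w' j) := by
    intro a; rw [hF]; exact mem_simplex_iff
  set i0 : Fin (k + 1) := ⟨0, by omega⟩ with hi0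
  set i1 : Fin (k + 1) := ⟨1, by omega⟩ with hi1
  have hne01 : i0 ≠ i1 := by simp [hi0, hi1, Fin.ext_iff]
  have hSsub : ∀ i, S ⊆ e i := by
    intro i
    rcases eq_or_ne i i0 with rfl | h
    · exact (hint i0 i1 hne01) ▸ Finset.inter_subset_left
    · exact (hint i i0 h) ▸ Finset.inter_subset_left
  have hcard : ∀ i, (e i).card = k + 1 := fun i => by rw [hE i]; exact simplex_card (hvw i)
  have hx' : ∀ i, ∃ a, e i \ S = {a} := by
    intro i
    apply Finset.card_eq_one.mp
    rw [Finset.card_sdiff_of_subset (hSsub i), hcard, hS]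
    omega
  choose x hx using hx'
  have hxe : ∀ i, x i ∈ e i ∧ x i ∉ S := by
    intro i
    have : x i ∈ e i \ S := by rw [hx i]; exact Finset.mem_singleton_self _
    simpa [Finset.mem_sdiff] using this
  have hvmem : ∀ i j, i ≠ j → v i ∈ e j := by
    intro i j hij
    by_cases hvS : v i ∈ S
    · exact hSsub j hvS
    · have hxv : v i = x i := by
        have : v i ∈ e i \ S :=
          Finset.mem_sdiff.mpr ⟨(hmem i _).mpr (Or.inl rfl), hvS⟩
        rw [hx i, Finset.mem_singleton] at this; exact this
      have hup : ∀ m : Fin k, Function.update (v i) m (w i m) ∈ e j := by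
        intro m
        apply hSsub j
        have h1 : Function.update (v i) m (w i m) ∈ e i :=
          (hmem i _).mpr (Or.inr ⟨m, rfl⟩)
        by_contra hns
        have h2 : Function.update (v i) m (w i m) ∈ e i \ S :=
          Finset.mem_sdiff.mpr ⟨h1, hns⟩
        rw [hx i, Finset.mem_singleton, ← hxv] at h2
        have := congrFun h2 m
        rw [Function.update_self] at this
        exact (hvw i m).ne' this
      have hvv : v i = v j :=
        apex_mem hk (hvw i) (hvw j) (fun m => (hmem j _).mp (hup m))
      rw [hvv]; exact (hmem j _).mpr (Or.inl rfl)
  have hveq : ∀ i j, v i = v j := by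
    intro i j
    rcases eq_or_ne i j with rfl | hij
    · rfl
    · exact le_antisymm
        (simplex_apex_le (hvw i) ((hmem i _).mp (hvmem j i (Ne.symm hij))))
        (simplex_apex_le (hvw j) ((hmem j _).mp (hvmem i j hij)))
  set v0 := v i0 with hv0
  have hvS : v0 ∈ S := by
    rw [← hint i0 i1 hne01]
    refine Finset.mem_inter.mpr ⟨(hmem i0 _).mpr (Or.inl rfl), ?_⟩
    rw [hv0, hveq i0 i1]
    exact (hmem i1 _).mpr (Or.inl rfl)
  have hvlt : ∀ i j, v0 j < w i j := by
    intro i j; have := hvw i j; rwa [hveq i i0] at this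
  have hxc : ∀ i, ∃ cd, x i = Function.update v0 cd (w i cd) := by
    intro i
    rcases (hmem i _).mp (hxe i).1 with h | ⟨j, h⟩
    · exfalso
      apply (hxe i).2
      rw [h, hveq i i0]
      exact hvS
    · rw [hveq i i0] at h
      exact ⟨j, h⟩
  choose c hc using hxc
  have hxinj : Function.Injective x := by
    intro a b hab
    by_contra hne
    apply (hxe a).2
    rw [← hint a b hne]
    refine Finset.mem_inter.mpr ⟨(hxe a).1, ?_⟩
    rw [hab]; exact (hxe b).1
  have hxf : ∀ i, x i ∈ f := fun i =>
    hsubf i (by rw [hx i]; exact Finset.mem_singleton_self _)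
  have hfcard : f.card = k + 1 := by rw [hF]; exact simplex_card huw
  have hfeq : f = Finset.univ.image x := by
    refine (Finset.eq_of_subset_of_card_le ?_ ?_).symm
    · intro a ha
      obtain ⟨i, -, rfl⟩ := Finset.mem_image.mp ha
      exact hxf i
    · rw [hfcard, Finset.card_image_of_injective _ hxinj, Finset.card_univ, Fintype.card_fin]
  have huf : u ∈ f := (hmemf u).mpr (Or.inl rfl)
  rw [hfeq] at huf
  obtain ⟨a, -, hua⟩ := Finset.mem_image.mp huf
  have hule : ∀ b, u ≤ x b := fun b => simplex_apex_le huw ((hmemf _).mp (hxf b))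
  have hcall : ∀ b, c b = c a := by
    intro b
    by_contra hcb
    have h1 := hule b (c a)
    have h2 : u (c a) = w a (c a) := by rw [← hua, hc a, Function.update_self]
    have h3 : x b (c a) = v0 (c a) := by
      rw [hc b]; exact Function.update_of_ne (fun h => hcb h.symm) _ _
    rw [h2, h3] at h1
    exact absurd h1 (not_le.mpr (hvlt a (c a)))
  obtain ⟨m, hm⟩ := exists_ne_fin hk (c a)
  have hq : Function.update u m (w' m) ∈ f := (hmemf _).mpr (Or.inr ⟨m, rfl⟩)
  rw [hfeq] at hq
  obtain ⟨b, -, hb⟩ := Finset.mem_image.mp hq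
  have hbm : x b m = w' m := by rw [hb, Function.update_self]
  have hxbm : x b m = v0 m := by
    rw [hc b, hcall b]; exact Function.update_of_ne hm _ _
  have hum : u m = v0 m := by
    rw [← hua, hc a]; exact Function.update_of_ne hm _ _
  have hlt := huw m
  rw [hum, ← hxbm, hbm] at hlt
  exact lt_irrefl _ hlt
end

section
/- Fix k ≥ 2 and let D_k be any special k-cluster. Every k-partite k-uniform hypergraph with parts of size n containing no copy of D_k has at most k·n^{k-1} edges. -/
/-- The family of special `k`-clusters, as `k`-uniform hypergraphs with vertices in `ℕ`,
together with a distinguished pair of disjoint edges `a, b`.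
`𝒟₂` consists of the 3-edge paths; a member of `𝒟_k` is obtained from a member of
`𝒟_{k-1}` by adding new vertices `x, y`, enlarging every edge by `x`, and adding the
new edge `a ∪ {y}`; the new distinguished disjoint edges are `a ∪ {y}` and `b ∪ {x}`. -/
inductive IsSpecialCluster : ℕ → Finset (Finset ℕ) → Finset ℕ → Finset ℕ → Prop
  | base (w x y z : ℕ) (hwx : w ≠ x) (hwy : w ≠ y) (hwz : w ≠ z)
      (hxy : x ≠ y) (hxz : x ≠ z) (hyz : y ≠ z) :
      IsSpecialCluster 2 {{w, x}, {x, y}, {y, z}} {w, x} {y, z}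
  | step (k : ℕ) (D : Finset (Finset ℕ)) (a b : Finset ℕ) (x y : ℕ)
      (hD : IsSpecialCluster k D a b)
      (hx : ∀ e ∈ D, x ∉ e) (hy : ∀ e ∈ D, y ∉ e) (hxy : x ≠ y) :
      IsSpecialCluster (k + 1) (insert (insert y a) (D.image (insert x ·)))
        (insert y a) (insert x b)

open Finset

lemma isc_a_mem {k D a b} (h : IsSpecialCluster k D a b) : a ∈ D := by
  induction h with
  | base w x y z => simp
  | step k D a b x y hD hx hy hxy ih => simp

lemma isc_two_le {k D a b} (h : IsSpecialCluster k D a b) : 2 ≤ k := by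
  induction h with
  | base => exact le_refl 2
  | step k D a b x y hD hx hy hxy ih => omega

lemma edge_struct {k n : ℕ} (e : Finset (Fin k × Fin n))
    (h : ∀ i : Fin k, (e.filter fun v => v.1 = i).card = 1) :
    ∃ f : Fin k → Fin n, e = Finset.univ.image (fun i => (i, f i)) := by
  have h1 : ∀ i, ∃ p : Fin k × Fin n, e.filter (fun v => v.1 = i) = {p} :=
    fun i => card_eq_one.mp (h i)
  choose p hp using h1
  have hpe : ∀ i, p i ∈ e ∧ (p i).1 = i := by
    intro i
    have := hp i ▸ mem_singleton_self (p i)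
    simpa using (mem_filter.mp this)
  refine ⟨fun i => (p i).2, ?_⟩
  ext q
  simp only [mem_image, mem_univ, true_and]
  constructor
  · intro hq
    refine ⟨q.1, ?_⟩
    have hq2 : q ∈ e.filter (fun v => v.1 = q.1) := mem_filter.mpr ⟨hq, rfl⟩
    rw [hp q.1, mem_singleton] at hq2
    calc (q.1, (p q.1).2) = ((p q.1).1, (p q.1).2) := by rw [(hpe q.1).2]
    _ = p q.1 := rfl
    _ = q := hq2.symm
  · rintro ⟨i, rfl⟩
    have : (i, (p i).2) = p i := Prod.ext (hpe i).2.symm rfl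
    rw [this]; exact (hpe i).1

lemma empty_of_n_zero {k : ℕ} (hk : 0 < k) (H : Finset (Finset (Fin k × Fin 0)))
    (htrans : ∀ e ∈ H, ∀ i : Fin k, (e.filter fun v => v.1 = i).card = 1) : H = ∅ := by
  ext e
  simp only [Finset.notMem_empty, iff_false]
  intro he
  have h := htrans e he ⟨0, hk⟩
  have : (e.filter fun v => v.1 = ⟨0, hk⟩).Nonempty := card_pos.mp (by omega)
  obtain ⟨p, _⟩ := this
  exact p.2.elim0

lemma mem_sup_path {w x y z m : ℕ}
    (hm : m ∈ (({{w, x}, {x, y}, {y, z}} : Finset (Finset ℕ)).sup id)) :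
    m = w ∨ m = x ∨ m = y ∨ m = z := by
  classical
  simp only [Finset.mem_sup, mem_insert, mem_singleton, id] at hm
  obtain ⟨i, hi, hmi⟩ := hm
  rcases hi with rfl | rfl | rfl <;> simp only [mem_insert, mem_singleton] at hmi <;> tauto

set_option maxHeartbeats 1000000 in
lemma base_case {n : ℕ} {w x y z : ℕ} (hwx : w ≠ x) (hwy : w ≠ y) (hwz : w ≠ z)
    (hxy : x ≠ y) (hxz : x ≠ z) (hyz : y ≠ z)
    (H : Finset (Finset (Fin 2 × Fin n)))
    (htrans : ∀ e ∈ H, ∀ i : Fin 2, (e.filter fun v => v.1 = i).card = 1)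
    (hfree : ¬ ∃ ψ : ℕ → Fin 2 × Fin n,
      Set.InjOn ψ ↑((({{w, x}, {x, y}, {y, z}} : Finset (Finset ℕ))).sup id) ∧
      ∀ e ∈ ({{w, x}, {x, y}, {y, z}} : Finset (Finset ℕ)), e.image ψ ∈ H) :
    H.card ≤ 2 * n ^ (2 - 1) := by
  classical
  rcases Nat.eq_zero_or_pos n with rfl | npos
  · rw [empty_of_n_zero (by norm_num) H htrans]; simp
  have hpow : n ^ (2 - 1) = n := pow_one n
  by_contra hcon
  push_neg at hcon
  have h0 : ∀ e, ∃ p : Fin 2 × Fin n, e ∈ H → e.filter (fun v => v.1 = 0) = {p} := by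
    intro e
    by_cases he : e ∈ H
    · obtain ⟨p, hp⟩ := card_eq_one.mp (htrans e he 0)
      exact ⟨p, fun _ => hp⟩
    · exact ⟨(0, ⟨0, npos⟩), fun h => absurd h he⟩
  have h1 : ∀ e, ∃ q : Fin 2 × Fin n, e ∈ H → e.filter (fun v => v.1 = 1) = {q} := by
    intro e
    by_cases he : e ∈ H
    · obtain ⟨q, hq⟩ := card_eq_one.mp (htrans e he 1)
      exact ⟨q, fun _ => hq⟩
    · exact ⟨(1, ⟨0, npos⟩), fun h => absurd h he⟩
  choose P hP using h0
  choose Q hQ using h1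
  have hPm : ∀ e ∈ H, P e ∈ e ∧ (P e).1 = 0 := by
    intro e he
    have := (hP e he) ▸ mem_singleton_self (P e)
    simpa using (mem_filter.mp this)
  have hQm : ∀ e ∈ H, Q e ∈ e ∧ (Q e).1 = 1 := by
    intro e he
    have := (hQ e he) ▸ mem_singleton_self (Q e)
    simpa using (mem_filter.mp this)
  have hpair : ∀ e ∈ H, e = {P e, Q e} := by
    intro e he
    ext r
    simp only [mem_insert, mem_singleton]
    constructor
    · intro hr
      have hr2 : r.1 = 0 ∨ r.1 = 1 := by
        have := r.1.isLt
        rcases Nat.lt_or_ge r.1.val 1 with h | h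
        · exact Or.inl (Fin.ext (by omega))
        · exact Or.inr (Fin.ext (by omega))
      rcases hr2 with h | h
      · left
        have : r ∈ e.filter (fun v => v.1 = 0) := mem_filter.mpr ⟨hr, h⟩
        rw [hP e he, mem_singleton] at this; exact this
      · right
        have : r ∈ e.filter (fun v => v.1 = 1) := mem_filter.mpr ⟨hr, h⟩
        rw [hQ e he, mem_singleton] at this; exact this
    · rintro (rfl | rfl)
      · exact (hPm e he).1
      · exact (hQm e he).1
  have key : ∃ e ∈ H, (∃ e1 ∈ H, P e1 = P e ∧ e1 ≠ e) ∧ (∃ e2 ∈ H, Q e2 = Q e ∧ e2 ≠ e) := by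
    by_contra hno
    push_neg at hno
    have hsub : H ⊆ H.filter (fun e => ∀ e' ∈ H, P e' = P e → e' = e) ∪
        H.filter (fun e => ∀ e' ∈ H, Q e' = Q e → e' = e) := by
      intro e he
      by_cases hc : ∀ e' ∈ H, P e' = P e → e' = e
      · exact mem_union_left _ (mem_filter.mpr ⟨he, hc⟩)
      · push_neg at hc
        obtain ⟨e1, he1, hpe1, hne1⟩ := hc
        exact mem_union_right _ (mem_filter.mpr ⟨he, hno e he ⟨e1, he1, hpe1, hne1⟩⟩)
    have c1 : (H.filter (fun e => ∀ e' ∈ H, P e' = P e → e' = e)).card ≤ n := by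
      have hinj : Set.InjOn (fun e => (P e).2)
          ↑(H.filter (fun e => ∀ e' ∈ H, P e' = P e → e' = e)) := by
        intro e1 h1 e2 h2 hP2
        simp only [coe_filter, Set.mem_setOf_eq] at h1 h2
        have hPeq : P e1 = P e2 := by
          apply Prod.ext
          · rw [(hPm e1 h1.1).2, (hPm e2 h2.1).2]
          · exact hP2
        exact h2.2 e1 h1.1 hPeq
      have := Finset.card_le_card_of_injOn (fun e => (P e).2)
        (fun e _ => mem_univ ((P e).2)) hinj
      simpa using this
    have c2 : (H.filter (fun e => ∀ e' ∈ H, Q e' = Q e → e' = e)).card ≤ n := by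
      have hinj : Set.InjOn (fun e => (Q e).2)
          ↑(H.filter (fun e => ∀ e' ∈ H, Q e' = Q e → e' = e)) := by
        intro e1 h1 e2 h2 hQ2
        simp only [coe_filter, Set.mem_setOf_eq] at h1 h2
        have hQeq : Q e1 = Q e2 := by
          apply Prod.ext
          · rw [(hQm e1 h1.1).2, (hQm e2 h2.1).2]
          · exact hQ2
        exact h2.2 e1 h1.1 hQeq
      have := Finset.card_le_card_of_injOn (fun e => (Q e).2)
        (fun e _ => mem_univ ((Q e).2)) hinj
      simpa using this
    have := (Finset.card_le_card hsub).trans (card_union_le _ _)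
    omega
  obtain ⟨e, he, ⟨e1, he1, hpe1, hne1⟩, ⟨e2, he2, hqe2, hne2⟩⟩ := key
  have hq1q : Q e1 ≠ Q e := by
    intro h
    apply hne1
    rw [hpair e1 he1, hpair e he, hpe1, h]
  have hp2p : P e2 ≠ P e := by
    intro h
    apply hne2
    rw [hpair e2 he2, hpair e he, hqe2, h]
  set ψ : ℕ → Fin 2 × Fin n :=
    fun m => if m = w then Q e1 else if m = x then P e else if m = y then Q e else P e2 with hψ
  have hψw : ψ w = Q e1 := if_pos rfl
  have hψx : ψ x = P e := by rw [hψ]; simp [Ne.symm hwx]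
  have hψy : ψ y = Q e := by rw [hψ]; simp [Ne.symm hwy, Ne.symm hxy]
  have hψz : ψ z = P e2 := by rw [hψ]; simp [Ne.symm hwz, Ne.symm hxz, Ne.symm hyz]
  have hne10 : ∀ r s : Fin 2 × Fin n, r.1 = 1 → s.1 = 0 → r ≠ s := by
    intro r s h1 h2 h
    rw [h, h2] at h1
    exact absurd h1 (by decide)
  apply hfree
  refine ⟨ψ, ?_, ?_⟩
  · intro u hu v hv huv
    have hu' := mem_sup_path hu
    have hv' := mem_sup_path hv
    rcases hu' with rfl | rfl | rfl | rfl <;> rcases hv' with rfl | rfl | rfl | rfl <;>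
      simp only [hψw, hψx, hψy, hψz] at huv <;>
      first
      | rfl
      | exact absurd huv hq1q
      | exact absurd huv.symm hq1q
      | exact absurd huv hp2p
      | exact absurd huv.symm hp2p
      | exact absurd huv (hne10 _ _ (hQm e1 he1).2 (hPm e he).2)
      | exact absurd huv.symm (hne10 _ _ (hQm e1 he1).2 (hPm e he).2)
      | exact absurd huv (hne10 _ _ (hQm e1 he1).2 (hPm e2 he2).2)
      | exact absurd huv.symm (hne10 _ _ (hQm e1 he1).2 (hPm e2 he2).2)
      | exact absurd huv (hne10 _ _ (hQm e he).2 (hPm e he).2)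
      | exact absurd huv.symm (hne10 _ _ (hQm e he).2 (hPm e he).2)
      | exact absurd huv (hne10 _ _ (hQm e he).2 (hPm e2 he2).2)
      | exact absurd huv.symm (hne10 _ _ (hQm e he).2 (hPm e2 he2).2)
  · intro ed hed
    simp only [mem_insert, mem_singleton] at hed
    rcases hed with rfl | rfl | rfl
    · have : ({w, x} : Finset ℕ).image ψ = {Q e1, P e} := by
        rw [image_insert, image_singleton, hψw, hψx]
      rw [this, pair_comm, ← hpe1, ← hpair e1 he1]
      exact he1
    · have : ({x, y} : Finset ℕ).image ψ = {P e, Q e} := by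
        rw [image_insert, image_singleton, hψx, hψy]
      rw [this, ← hpair e he]
      exact he
    · have : ({y, z} : Finset ℕ).image ψ = {Q e, P e2} := by
        rw [image_insert, image_singleton, hψy, hψz]
      rw [this, pair_comm, ← hqe2, ← hpair e2 he2]
      exact he2

/-- projection from part-(k+1) world to part-k world (collapsing garbage for last part). -/
def downF (k n : ℕ) (hk : 0 < k) : Fin (k+1) × Fin n → Fin k × Fin n :=
  fun p => (if h : p.1.val < k then (⟨p.1.val, h⟩ : Fin k) else ⟨0, hk⟩, p.2)

def upF (k n : ℕ) : Fin k × Fin n → Fin (k+1) × Fin n := fun p => (p.1.castSucc, p.2)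

lemma val_lt_of_ne_last {k : ℕ} {i : Fin (k+1)} (h : i ≠ Fin.last k) : i.val < k := by
  have h1 := i.isLt
  have h2 : i.val ≠ k := fun hc => h (Fin.ext (by simp [hc]))
  omega

lemma upF_ne_last {k n : ℕ} (p : Fin k × Fin n) : (upF k n p).1 ≠ Fin.last k :=
  Fin.ne_of_lt (Fin.castSucc_lt_last p.1)

lemma upF_inj {k n : ℕ} : Function.Injective (upF k n) := by
  intro p q h
  simp only [upF, Prod.ext_iff] at h
  exact Prod.ext (Fin.castSucc_injective _ h.1) h.2

lemma up_down {k n : ℕ} (hk : 0 < k) (p : Fin (k+1) × Fin n) (hp : p.1 ≠ Fin.last k) :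
    upF k n (downF k n hk p) = p := by
  have hv := val_lt_of_ne_last hp
  simp only [downF, upF, dif_pos hv]
  exact Prod.ext (Fin.ext (by simp)) rfl

lemma down_up {k n : ℕ} (hk : 0 < k) (p : Fin k × Fin n) :
    downF k n hk (upF k n p) = p := by
  have hv : (upF k n p).1.val < k := val_lt_of_ne_last (upF_ne_last p)
  simp only [downF, upF, dif_pos hv] at *
  exact Prod.ext (Fin.ext (by simp [upF])) rfl

lemma image_down_up {k n : ℕ} (hk : 0 < k) (s : Finset (Fin (k+1) × Fin n))
    (hs : ∀ p ∈ s, p.1 ≠ Fin.last k) :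
    (s.image (downF k n hk)).image (upF k n) = s := by
  rw [Finset.image_image]
  have : ∀ p ∈ s, (upF k n ∘ downF k n hk) p = id p := by
    intro p hp; exact up_down hk p (hs p hp)
  rw [Finset.image_congr this, Finset.image_id]

lemma eq_insert_top {k n : ℕ} {e : Finset (Fin (k+1) × Fin n)} {q : Fin (k+1) × Fin n}
    (hcard : (e.filter fun v => v.1 = Fin.last k).card = 1) (hq : q ∈ e) (hq1 : q.1 = Fin.last k) :
    e = insert q (e.filter fun v => v.1 ≠ Fin.last k) := by
  classical
  obtain ⟨t, ht⟩ := Finset.card_eq_one.mp hcard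
  have hqt : q = t := by
    have : q ∈ e.filter fun v => v.1 = Fin.last k := Finset.mem_filter.mpr ⟨hq, hq1⟩
    rw [ht, Finset.mem_singleton] at this; exact this
  ext r
  simp only [Finset.mem_insert, Finset.mem_filter]
  constructor
  · intro hr
    by_cases hr1 : r.1 = Fin.last k
    · left
      have : r ∈ e.filter fun v => v.1 = Fin.last k := Finset.mem_filter.mpr ⟨hr, hr1⟩
      rw [ht, Finset.mem_singleton] at this
      rw [this, ← hqt]
    · exact Or.inr ⟨hr, hr1⟩
  · rintro (rfl | ⟨hr, _⟩)
    · exact hq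
    · exact hr

lemma core_eq_image {k n : ℕ} (f : Fin (k+1) → Fin n) :
    ((Finset.univ.image (fun i => (i, f i))).filter
        (fun v : Fin (k+1) × Fin n => v.1 ≠ Fin.last k)) =
      Finset.univ.image (fun j : Fin k => (j.castSucc, f j.castSucc)) := by
  classical
  ext q
  simp only [Finset.mem_filter, Finset.mem_image, Finset.mem_univ, true_and]
  constructor
  · rintro ⟨⟨i, rfl⟩, hne⟩
    obtain ⟨j, rfl⟩ := Fin.exists_castSucc_eq.mpr (by simpa using hne)
    exact ⟨j, rfl⟩
  · rintro ⟨j, rfl⟩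
    exact ⟨⟨j.castSucc, rfl⟩, Fin.ne_of_lt (Fin.castSucc_lt_last j)⟩

lemma filter_image_down {k n : ℕ} (hk : 0 < k) (e : Finset (Fin (k+1) × Fin n)) (i : Fin k)
    (p : Fin (k+1) × Fin n)
    (hp : e.filter (fun v => v.1 = i.castSucc) = {p}) :
    (((e.filter (fun v => v.1 ≠ Fin.last k)).image (downF k n hk)).filter
      (fun v => v.1 = i)) = {downF k n hk p} := by
  classical
  have hpm : p ∈ e ∧ p.1 = i.castSucc := by
    have := hp ▸ Finset.mem_singleton_self p
    simpa using Finset.mem_filter.mp this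
  ext q
  simp only [Finset.mem_filter, Finset.mem_image, Finset.mem_singleton]
  constructor
  · rintro ⟨⟨r, hr, rfl⟩, hq1⟩
    obtain ⟨hre, hrne⟩ := hr
    have hrv : r.1.val < k := val_lt_of_ne_last hrne
    have h1 : (downF k n hk r).1 = (⟨r.1.val, hrv⟩ : Fin k) := by
      simp only [downF, dif_pos hrv]
    have hri : r.1 = i.castSucc := by
      rw [h1] at hq1
      exact Fin.ext (by simpa using congrArg Fin.val hq1)
    have : r ∈ e.filter (fun v => v.1 = i.castSucc) := Finset.mem_filter.mpr ⟨hre, hri⟩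
    rw [hp, Finset.mem_singleton] at this
    rw [this]
  · rintro rfl
    have hpne : p.1 ≠ Fin.last k := by
      rw [hpm.2]; exact Fin.ne_of_lt (Fin.castSucc_lt_last i)
    have hpv : p.1.val < k := val_lt_of_ne_last hpne
    refine ⟨⟨p, ⟨hpm.1, hpne⟩, rfl⟩, ?_⟩
    simp only [downF, dif_pos hpv]
    exact Fin.ext (by simp [hpm.2])

lemma mem_sup_step {D' : Finset (Finset ℕ)} {a' : Finset ℕ} {x0 y0 m : ℕ} (ha : a' ∈ D')
    (hm : m ∈ ((insert (insert y0 a') (D'.image (insert x0 ·))).sup id)) :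
    m = x0 ∨ m = y0 ∨ m ∈ D'.sup id := by
  classical
  simp only [Finset.mem_sup, Finset.mem_insert, Finset.mem_image, id] at hm
  obtain ⟨e, he, hme⟩ := hm
  rcases he with rfl | ⟨e', he', rfl⟩
  · rcases Finset.mem_insert.mp hme with rfl | hma
    · exact Or.inr (Or.inl rfl)
    · exact Or.inr (Or.inr (Finset.mem_sup.mpr ⟨a', ha, hma⟩))
  · rcases Finset.mem_insert.mp hme with rfl | hme'
    · exact Or.inl rfl
    · exact Or.inr (Or.inr (Finset.mem_sup.mpr ⟨e', he', hme'⟩))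

lemma mem_sup_of_mem {α : Type*} [DecidableEq α] {D : Finset (Finset α)} {e : Finset α}
    (he : e ∈ D) {m : α} (hm : m ∈ e) : m ∈ D.sup id :=
  Finset.mem_sup.mpr ⟨e, he, hm⟩

lemma pigeon {k n : ℕ} (npos : 0 < n) (hk : 0 < k)
    (H2 : Finset (Finset (Fin (k+1) × Fin n)))
    (htop : ∀ e ∈ H2, ∃ t ∈ e, t.1 = Fin.last k)
    (hbig : k * n ^ k < H2.card) :
    ∃ xv : Fin n, k * n ^ (k-1) < (H2.filter (fun e => (Fin.last k, xv) ∈ e)).card := by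
  classical
  by_contra hno
  push_neg at hno
  have hsub : H2 ⊆ Finset.univ.biUnion
      (fun xv : Fin n => H2.filter (fun e => (Fin.last k, xv) ∈ e)) := by
    intro e he
    obtain ⟨t, hte, ht1⟩ := htop e he
    refine Finset.mem_biUnion.mpr ⟨t.2, Finset.mem_univ _, Finset.mem_filter.mpr ⟨he, ?_⟩⟩
    have : (Fin.last k, t.2) = t := Prod.ext ht1.symm rfl
    rw [this]; exact hte
  have h1 : H2.card ≤ n * (k * n ^ (k-1)) := by
    calc H2.card ≤ (Finset.univ.biUnion
        (fun xv : Fin n => H2.filter (fun e => (Fin.last k, xv) ∈ e))).card :=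
          Finset.card_le_card hsub
      _ ≤ ∑ xv : Fin n, (H2.filter (fun e => (Fin.last k, xv) ∈ e)).card :=
          Finset.card_biUnion_le
      _ ≤ ∑ _xv : Fin n, (k * n ^ (k-1)) := Finset.sum_le_sum (fun i _ => hno i)
      _ = n * (k * n ^ (k-1)) := by
          simp [Finset.sum_const, Finset.card_univ]
  have h2 : n * (k * n ^ (k-1)) = k * n ^ k := by
    have hk1 : k - 1 + 1 = k := by omega
    calc n * (k * n ^ (k-1)) = k * (n * n ^ (k-1)) := by ring
      _ = k * n ^ (k-1+1) := by rw [pow_succ']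
      _ = k * n ^ k := by rw [hk1]
  omega

set_option maxHeartbeats 1000000 in
lemma step_case {k n : ℕ} {D' : Finset (Finset ℕ)} {a' b' : Finset ℕ} {x0 y0 : ℕ}
    (hD' : IsSpecialCluster k D' a' b')
    (hx : ∀ e ∈ D', x0 ∉ e) (hy : ∀ e ∈ D', y0 ∉ e) (hxy : x0 ≠ y0)
    (IH : ∀ (L : Finset (Finset (Fin k × Fin n))),
      (∀ E ∈ L, ∀ i : Fin k, (E.filter fun v => v.1 = i).card = 1) →
      (¬ ∃ ψ : ℕ → Fin k × Fin n, Set.InjOn ψ ↑(D'.sup id) ∧ ∀ e ∈ D', e.image ψ ∈ L) →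
      L.card ≤ k * n ^ (k - 1))
    (H : Finset (Finset (Fin (k+1) × Fin n)))
    (htrans : ∀ e ∈ H, ∀ i : Fin (k+1), (e.filter fun v => v.1 = i).card = 1)
    (hfree : ¬ ∃ ψ : ℕ → Fin (k+1) × Fin n,
      Set.InjOn ψ ↑((insert (insert y0 a') (D'.image (insert x0 ·))).sup id) ∧
      ∀ e ∈ insert (insert y0 a') (D'.image (insert x0 ·)), e.image ψ ∈ H) :
    H.card ≤ (k+1) * n ^ k := by
  classical
  have hk2 := isc_two_le hD'
  have hk : 0 < k := by omega
  rcases Nat.eq_zero_or_pos n with rfl | npos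
  · rw [empty_of_n_zero (Nat.succ_pos k) H htrans]; simp
  by_contra hcon
  push_neg at hcon
  -- bound on lonely edges
  have hlone : (H.filter (fun e => ∀ e' ∈ H,
      e'.filter (fun v => v.1 ≠ Fin.last k) = e.filter (fun v => v.1 ≠ Fin.last k) →
        e' = e)).card ≤ n ^ k := by
    have hG : ∀ e : Finset (Fin (k+1) × Fin n), ∃ g : Fin k → Fin n, e ∈ H →
        e.filter (fun v => v.1 ≠ Fin.last k)
          = Finset.univ.image (fun j : Fin k => (j.castSucc, g j)) := by
      intro e
      by_cases he : e ∈ H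
      · obtain ⟨f, hf⟩ := edge_struct e (htrans e he)
        refine ⟨fun j => f j.castSucc, fun _ => ?_⟩
        rw [hf]
        exact core_eq_image f
      · exact ⟨fun _ => ⟨0, npos⟩, fun h => absurd h he⟩
    choose G hGs using hG
    have hinj : Set.InjOn G ↑(H.filter (fun e => ∀ e' ∈ H,
        e'.filter (fun v => v.1 ≠ Fin.last k) = e.filter (fun v => v.1 ≠ Fin.last k) →
          e' = e)) := by
      intro e1 h1 e2 h2 hGe
      simp only [coe_filter, Set.mem_setOf_eq] at h1 h2
      have hc : e1.filter (fun v => v.1 ≠ Fin.last k)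
          = e2.filter (fun v => v.1 ≠ Fin.last k) := by
        rw [hGs e1 h1.1, hGs e2 h2.1, hGe]
      exact h2.2 e1 h1.1 hc
    have hcard := Finset.card_le_card_of_injOn G (fun e _ => mem_univ (G e)) hinj
    have huniv : (Finset.univ : Finset (Fin k → Fin n)).card = n ^ k := by simp
    omega
  have hsplit := Finset.card_filter_add_card_filter_not (s := H)
    (p := fun e => ∀ e' ∈ H,
      e'.filter (fun v => v.1 ≠ Fin.last k) = e.filter (fun v => v.1 ≠ Fin.last k) → e' = e)
  have hH2card : k * n ^ k < (H.filter (fun e => ¬ ∀ e' ∈ H,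
      e'.filter (fun v => v.1 ≠ Fin.last k) = e.filter (fun v => v.1 ≠ Fin.last k) →
        e' = e)).card := by
    have hmul : (k+1) * n ^ k = k * n ^ k + n ^ k := by ring
    omega
  have hpig : ∃ xv : Fin n, k * n ^ (k-1) < ((H.filter (fun e => ¬ ∀ e' ∈ H,
      e'.filter (fun v => v.1 ≠ Fin.last k) = e.filter (fun v => v.1 ≠ Fin.last k) →
        e' = e)).filter (fun e => (Fin.last k, xv) ∈ e)).card := by
    apply pigeon npos hk _ _ hH2card
    intro e he
    have heH : e ∈ H := (mem_filter.mp he).1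
    obtain ⟨t, ht⟩ := card_eq_one.mp (htrans e heH (Fin.last k))
    have htm : t ∈ e ∧ t.1 = Fin.last k := by
      have := ht ▸ mem_singleton_self t
      simpa using mem_filter.mp this
    exact ⟨t, htm.1, htm.2⟩
  obtain ⟨xv, hxvcard⟩ := hpig
  have hHxH : ∀ e ∈ (H.filter (fun e => ¬ ∀ e' ∈ H,
      e'.filter (fun v => v.1 ≠ Fin.last k) = e.filter (fun v => v.1 ≠ Fin.last k) →
        e' = e)).filter (fun e => (Fin.last k, xv) ∈ e), e ∈ H :=
    fun e he => (mem_filter.mp (mem_filter.mp he).1).1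
  set Hx := (H.filter (fun e => ¬ ∀ e' ∈ H,
      e'.filter (fun v => v.1 ≠ Fin.last k) = e.filter (fun v => v.1 ≠ Fin.last k) →
        e' = e)).filter (fun e => (Fin.last k, xv) ∈ e) with hHxdef
  have hins : ∀ e ∈ Hx, e = insert (Fin.last k, xv) (e.filter (fun v => v.1 ≠ Fin.last k)) := by
    intro e he
    exact eq_insert_top (htrans e (hHxH e he) (Fin.last k)) (mem_filter.mp he).2 rfl
  have hLinj : Set.InjOn
      (fun e => (e.filter (fun v : Fin (k+1) × Fin n => v.1 ≠ Fin.last k)).image (downF k n hk))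
      (↑Hx : Set (Finset (Fin (k+1) × Fin n))) := by
    intro e1 h1 e2 h2 heq
    have heq' : (e1.filter (fun v => v.1 ≠ Fin.last k)).image (downF k n hk)
        = (e2.filter (fun v => v.1 ≠ Fin.last k)).image (downF k n hk) := heq
    have hcores : e1.filter (fun v => v.1 ≠ Fin.last k) = e2.filter (fun v => v.1 ≠ Fin.last k) := by
      rw [← image_down_up hk (e1.filter (fun v => v.1 ≠ Fin.last k))
          (fun p hp => (mem_filter.mp hp).2),
        ← image_down_up hk (e2.filter (fun v => v.1 ≠ Fin.last k))
          (fun p hp => (mem_filter.mp hp).2), heq']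
    rw [hins e1 h1, hins e2 h2, hcores]
  set L := Hx.image
    (fun e => (e.filter (fun v : Fin (k+1) × Fin n => v.1 ≠ Fin.last k)).image (downF k n hk))
    with hLdef
  have hLcard : k * n ^ (k-1) < L.card := by
    rw [hLdef, card_image_of_injOn hLinj]
    exact hxvcard
  have hLtrans : ∀ E ∈ L, ∀ i : Fin k, (E.filter fun v => v.1 = i).card = 1 := by
    intro E hE i
    obtain ⟨e, he, heq⟩ := mem_image.mp hE
    have heq' : (e.filter (fun v => v.1 ≠ Fin.last k)).image (downF k n hk) = E := heq
    obtain ⟨p, hp⟩ := card_eq_one.mp (htrans e (hHxH e he) i.castSucc)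
    rw [← heq', filter_image_down hk e i p hp]
    exact card_singleton _
  have hLfree : ¬ ∃ ψ' : ℕ → Fin k × Fin n,
      Set.InjOn ψ' ↑(D'.sup id) ∧ ∀ e' ∈ D', e'.image ψ' ∈ L := by
    rintro ⟨ψ', hinj', hedge'⟩
    have ha'D : a' ∈ D' := isc_a_mem hD'
    have hrecov : ∀ e' ∈ D', ∃ eH ∈ Hx,
        eH.filter (fun v => v.1 ≠ Fin.last k) = (e'.image ψ').image (upF k n) := by
      intro e' he'
      obtain ⟨eH, heH, heq⟩ := mem_image.mp (hedge' e' he')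
      have heq' : (eH.filter (fun v => v.1 ≠ Fin.last k)).image (downF k n hk)
          = e'.image ψ' := heq
      refine ⟨eH, heH, ?_⟩
      have h1 := (image_down_up hk (eH.filter (fun v => v.1 ≠ Fin.last k))
        (fun p hp => (mem_filter.mp hp).2)).symm
      rw [heq'] at h1
      exact h1
    have hEdgeH : ∀ e' ∈ D', insert (Fin.last k, xv) ((e'.image ψ').image (upF k n)) ∈ H := by
      intro e' he'
      obtain ⟨eH, heH, hcoreq⟩ := hrecov e' he'
      have h1 := hins eH heH
      rw [hcoreq] at h1
      rw [← h1]
      exact hHxH eH heH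
    obtain ⟨ea, hea, hcorea⟩ := hrecov a' ha'D
    have hnl : ¬ ∀ e' ∈ H, e'.filter (fun v => v.1 ≠ Fin.last k)
        = ea.filter (fun v => v.1 ≠ Fin.last k) → e' = ea :=
      (mem_filter.mp ((mem_filter.mp hea).1)).2
    push_neg at hnl
    obtain ⟨e2, he2, hc2, hne2⟩ := hnl
    obtain ⟨t2, ht2⟩ := card_eq_one.mp (htrans e2 he2 (Fin.last k))
    have ht2m : t2 ∈ e2 ∧ t2.1 = Fin.last k := by
      have := ht2 ▸ mem_singleton_self t2
      simpa using mem_filter.mp this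
    have he2eq : e2 = insert t2 (e2.filter (fun v => v.1 ≠ Fin.last k)) :=
      eq_insert_top (htrans e2 he2 (Fin.last k)) ht2m.1 ht2m.2
    have ht2v : t2 = (Fin.last k, t2.2) := Prod.ext ht2m.2 rfl
    have hyvxv : t2 ≠ (Fin.last k, xv) := by
      intro h
      apply hne2
      rw [he2eq, hc2, h]
      exact (hins ea hea).symm
    set ψ : ℕ → Fin (k+1) × Fin n := fun m =>
      if m = x0 then (Fin.last k, xv) else if m = y0 then t2 else upF k n (ψ' m) with hψdef
    have hψx0 : ψ x0 = (Fin.last k, xv) := if_pos rfl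
    have hψy0 : ψ y0 = t2 := by rw [hψdef]; simp [Ne.symm hxy]
    have hψother : ∀ m, m ≠ x0 → m ≠ y0 → ψ m = upF k n (ψ' m) := by
      intro m h1 h2; rw [hψdef]; simp [h1, h2]
    have hxne : ∀ m, m ∈ D'.sup id → m ≠ x0 := by
      intro m hm h
      obtain ⟨e', he', hme⟩ := Finset.mem_sup.mp hm
      exact hx e' he' (h ▸ hme)
    have hyne : ∀ m, m ∈ D'.sup id → m ≠ y0 := by
      intro m hm h
      obtain ⟨e', he', hme⟩ := Finset.mem_sup.mp hm
      exact hy e' he' (h ▸ hme)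
    have hupne1 : ∀ p : Fin k × Fin n, (Fin.last k, xv) ≠ upF k n p := by
      intro p h
      exact upF_ne_last p (congrArg Prod.fst h).symm
    have hupne2 : ∀ p : Fin k × Fin n, t2 ≠ upF k n p := by
      intro p h
      exact upF_ne_last p (h ▸ ht2m.2)
    apply hfree
    refine ⟨ψ, ?_, ?_⟩
    · intro u hu v hv huv
      have hu' := mem_sup_step ha'D (Finset.mem_coe.mp hu)
      have hv' := mem_sup_step ha'D (Finset.mem_coe.mp hv)
      rcases hu' with rfl | rfl | hu2 <;> rcases hv' with rfl | rfl | hv2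
      · rfl
      · rw [hψx0, hψy0] at huv
        exact absurd huv.symm hyvxv
      · rw [hψx0, hψother v (hxne v hv2) (hyne v hv2)] at huv
        exact absurd huv (hupne1 _)
      · rw [hψx0, hψy0] at huv
        exact absurd huv hyvxv
      · rfl
      · rw [hψy0, hψother v (hxne v hv2) (hyne v hv2)] at huv
        exact absurd huv (hupne2 _)
      · rw [hψx0, hψother u (hxne u hu2) (hyne u hu2)] at huv
        exact absurd huv.symm (hupne1 _)
      · rw [hψy0, hψother u (hxne u hu2) (hyne u hu2)] at huv
        exact absurd huv.symm (hupne2 _)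
      · rw [hψother u (hxne u hu2) (hyne u hu2), hψother v (hxne v hv2) (hyne v hv2)] at huv
        exact hinj' (Finset.mem_coe.mpr hu2) (Finset.mem_coe.mpr hv2) (upF_inj huv)
    · intro e he
      rcases Finset.mem_insert.mp he with rfl | hei
      · have himg : (insert y0 a').image ψ = insert t2 ((a'.image ψ').image (upF k n)) := by
          rw [Finset.image_insert, hψy0, Finset.image_image]
          congr 1
          apply Finset.image_congr
          intro m hm
          exact hψother m (fun h => hx a' ha'D (h ▸ hm)) (fun h => hy a' ha'D (h ▸ hm))
        rw [himg, ← hcorea, ← hc2, ← he2eq]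
        exact he2
      · obtain ⟨e', he', heq⟩ := Finset.mem_image.mp hei
        have heq' : insert x0 e' = e := heq
        rw [← heq']
        have himg : (insert x0 e').image ψ
            = insert (Fin.last k, xv) ((e'.image ψ').image (upF k n)) := by
          rw [Finset.image_insert, hψx0, Finset.image_image]
          congr 1
          apply Finset.image_congr
          intro m hm
          exact hψother m (fun h => hx e' he' (h ▸ hm)) (fun h => hy e' he' (h ▸ hm))
        rw [himg]
        exact hEdgeH e' he'
  have := IH L hLtrans hLfree
  omega

lemma isc_key {k : ℕ} {D : Finset (Finset ℕ)} {a b : Finset ℕ} (hD : IsSpecialCluster k D a b) :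
    ∀ (n : ℕ) (H : Finset (Finset (Fin k × Fin n))),
      (∀ e ∈ H, ∀ i : Fin k, (e.filter fun v => v.1 = i).card = 1) →
      (¬ ∃ ψ : ℕ → Fin k × Fin n, Set.InjOn ψ ↑(D.sup id) ∧ ∀ e ∈ D, e.image ψ ∈ H) →
      H.card ≤ k * n ^ (k - 1) := by
  induction hD with
  | base w x y z hwx hwy hwz hxy hxz hyz =>
      intro n H htrans hfree
      exact base_case hwx hwy hwz hxy hxz hyz H htrans hfree
  | step k D a b x y hD hx hy hxy ih =>
      intro n H htrans hfree
      have h := step_case hD hx hy hxy (fun L h1 h2 => ih n L h1 h2) H htrans hfree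
      simpa using h

/-- Every `k`-partite `k`-uniform hypergraph with parts of size `n` (vertices
`Fin k × Fin n`, each edge a transversal) containing no copy of the special
`k`-cluster `D_k` has at most `k·n^(k-1)` edges. -/
theorem stmt13 (k : ℕ) (hk : 2 ≤ k) (D : Finset (Finset ℕ)) (a b : Finset ℕ)
    (hD : IsSpecialCluster k D a b) (n : ℕ) (H : Finset (Finset (Fin k × Fin n)))
    (htrans : ∀ e ∈ H, ∀ i : Fin k, (e.filter fun v => v.1 = i).card = 1)
    (hfree : ¬ ∃ ψ : ℕ → Fin k × Fin n, Set.InjOn ψ ↑(D.sup id) ∧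
      ∀ e ∈ D, e.image ψ ∈ H) :
    H.card ≤ k * n ^ (k - 1) :=
  isc_key hD n H htrans hfree
end

section
/- Fix k ≥ 2 and let J_k be the (k+1)-uniform hypergraph with vertex set X_1×···×X_k (each X_i ≅ [n]) whose edges are the copies of some fixed special k-cluster D_k. Then α(J_k) ≤ k·n^{k-1}. -/
/-!
Identify a transversal edge with the function `ι → α` whose graph it is, and induct along the
construction of the cluster. Suppose `D'` arises from `D` by adding `x` to every edge and the
new edge `a ∪ {y}`, and fix a part `ℓ`. Call a function *shared* if another member of the family
agrees with it off `ℓ` but differs at `ℓ`. Unshared members are determined by their restriction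
away from `ℓ`, so there are at most `n ^ (|ι| - 1)` of them. For each value `p`, the restrictions
of the shared members with value `p` at `ℓ` form a `D`-free family on the other parts: a copy of
`D` there extends to a copy of `D'` by sending `x` to `(ℓ, p)` and `y` to `(ℓ, q)`, where `q` is
the other value at `ℓ` of the member realising the edge `a`. The path `D₂` is itself such an
extension of two disjoint singletons, whose free families have at most one member.
-/

open Finset

section Restrict

variable {ι α : Type*}

def restrictAway (ℓ : ι) (f : ι → α) : {i // i ≠ ℓ} → α :=
  fun i => f i

lemma eq_of_apply_eq_of_restrictAway_eq {ℓ : ι} {f g : ι → α} (hℓ : f ℓ = g ℓ)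
    (h : restrictAway ℓ f = restrictAway ℓ g) : f = g := by
  funext i
  by_cases hi : i = ℓ
  · rw [hi, hℓ]
  · exact congrFun h ⟨i, hi⟩

lemma restrictAway_injOn_fiber (ℓ : ι) (p : α) :
    Set.InjOn (restrictAway ℓ) {f : ι → α | f ℓ = p} :=
  fun _ hf _ hg => eq_of_apply_eq_of_restrictAway_eq (hf.trans hg.symm)

end Restrict

section Embedding

variable {ι α : Type*} [Fintype ι] [DecidableEq ι] [DecidableEq α]

def graphFinset (f : ι → α) : Finset (ι × α) :=
  univ.image fun i => (i, f i)

@[simp]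
lemma mem_graphFinset {f : ι → α} {v : ι × α} : v ∈ graphFinset f ↔ f v.1 = v.2 := by
  obtain ⟨i, c⟩ := v
  simp [graphFinset, eq_comm]

lemma graphFinset_injective : Function.Injective (graphFinset : (ι → α) → Finset (ι × α)) :=
  fun f g h => funext fun i => by simpa [eq_comm] using (Finset.ext_iff.mp h (i, f i)).mp (by simp)

lemma exists_graphFinset_eq {e : Finset (ι × α)}
    (he : ∀ i, (e.filter fun v => v.1 = i).card = 1) : ∃ f : ι → α, graphFinset f = e := by
  choose v hv using fun i => card_eq_one.mp (he i)
  have hv_fst (i : ι) : (v i).1 = i := by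
    have h := mem_singleton_self (v i)
    rw [← hv i, mem_filter] at h
    exact h.2
  refine ⟨fun i => (v i).2, Finset.ext fun ⟨i, c⟩ => ?_⟩
  have hfib : (i, c) ∈ e ↔ (i, c) = v i := by
    simpa using Finset.ext_iff.mp (hv i) (i, c)
  rw [mem_graphFinset, hfib, Prod.ext_iff, hv_fst i]
  exact ⟨fun h => ⟨rfl, h.symm⟩, fun h => h.2.symm⟩

lemma graphFinset_eq_insert_image_restrictAway (ℓ : ι) (f : ι → α) :
    graphFinset f = insert (ℓ, f ℓ)
      ((graphFinset (restrictAway ℓ f)).image (Prod.map Subtype.val id)) := by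
  ext ⟨i, c⟩
  by_cases hi : i = ℓ
  · subst hi; simp [eq_comm]
  · simp [hi, restrictAway]

def Embeds (D : Finset (Finset ℕ)) (F : Finset (ι → α)) : Prop :=
  ∃ ψ : ℕ → ι × α, Set.InjOn ψ ↑(D.sup id) ∧ ∀ e ∈ D, e.image ψ ∈ F.image graphFinset

lemma exists_image_graphFinset_eq [Fintype α] {H : Finset (Finset (ι × α))}
    (hH : ∀ e ∈ H, ∀ i, (e.filter fun v => v.1 = i).card = 1) :
    ∃ F : Finset (ι → α), F.image graphFinset = H := by
  refine ⟨univ.filter (graphFinset · ∈ H), Finset.ext fun e => ⟨?_, fun he => ?_⟩⟩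
  · simp only [mem_image, mem_filter, mem_univ, true_and]
    rintro ⟨f, hf, rfl⟩
    exact hf
  · obtain ⟨f, rfl⟩ := exists_graphFinset_eq (hH e he)
    exact mem_image_of_mem _ (mem_filter.mpr ⟨mem_univ f, he⟩)

lemma card_le_one_of_not_embeds_pair (hι : Fintype.card ι = 1) {x z : ℕ} (hxz : x ≠ z)
    {F : Finset (ι → α)} (hF : ¬ Embeds {{x}, {z}} F) : F.card ≤ 1 := by
  obtain ⟨i₀, hi₀⟩ := Fintype.card_eq_one_iff.mp hι
  have hgraph (f : ι → α) : graphFinset f = {(i₀, f i₀)} := by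
    ext ⟨i, c⟩
    obtain rfl := hi₀ i
    simp [eq_comm]
  refine card_le_one.mpr fun f hf g hg => by_contra fun hfg => hF ?_
  have hfg₀ : f i₀ ≠ g i₀ := fun h => hfg (funext fun i => hi₀ i ▸ h)
  refine ⟨fun m => if m = x then (i₀, f i₀) else (i₀, g i₀), ?_, ?_⟩
  · intro m hm m' hm' h
    simp only [sup_insert, sup_singleton, id_eq, sup_eq_union, mem_coe, mem_union,
      mem_singleton] at hm hm'
    rcases hm with rfl | rfl <;> rcases hm' with rfl | rfl <;> simp_all [eq_comm]
  · intro e he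
    rcases mem_insert.mp he with rfl | he
    · exact mem_image.mpr ⟨f, hf, by simp [hgraph]⟩
    · rw [mem_singleton.mp he]
      exact mem_image.mpr ⟨g, hg, by simp [hgraph, hxz.symm]⟩

variable {D : Finset (Finset ℕ)} {a : Finset ℕ} {x y : ℕ}

def Shared (F : Finset (ι → α)) (ℓ : ι) (f : ι → α) : Prop :=
  ∃ g ∈ F, g ℓ ≠ f ℓ ∧ restrictAway ℓ g = restrictAway ℓ f

instance (F : Finset (ι → α)) (ℓ : ι) : DecidablePred (Shared F ℓ) :=
  fun _ => inferInstanceAs (Decidable (∃ _ ∈ F, _))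

lemma sup_id_insert_image_insert_subset (ha : a ∈ D) :
    (insert (insert y a) (D.image (insert x ·))).sup id ⊆ insert x (insert y (D.sup id)) := by
  have hsup {e : Finset ℕ} {m : ℕ} (he : e ∈ D) (hm : m ∈ e) :
      m ∈ insert x (insert y (D.sup id)) :=
    mem_insert_of_mem (mem_insert_of_mem (mem_sup.mpr ⟨e, he, hm⟩))
  intro m hm
  obtain ⟨e', he', hm⟩ := mem_sup.mp hm
  rcases mem_insert.mp he' with rfl | he'
  · rcases mem_insert.mp hm with rfl | hm
    · simp
    · exact hsup ha hm
  · obtain ⟨e, he, rfl⟩ := mem_image.mp he'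
    rcases mem_insert.mp hm with rfl | hm
    · simp
    · exact hsup he hm

lemma Embeds.insert_image_insert [Fintype α] {F : Finset (ι → α)} {ℓ : ι} {p : α} (ha : a ∈ D)
    (hx : ∀ e ∈ D, x ∉ e) (hy : ∀ e ∈ D, y ∉ e) (hxy : x ≠ y)
    (h : Embeds D (((F.filter (Shared F ℓ)).filter fun f => f ℓ = p).image (restrictAway ℓ))) :
    Embeds (insert (insert y a) (D.image (insert x ·))) F := by
  obtain ⟨ψ, hψ, hedge⟩ := h
  have hrealized (e : Finset ℕ) (he : e ∈ D) : ∃ f ∈ F, Shared F ℓ f ∧ f ℓ = p ∧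
      graphFinset (restrictAway ℓ f) = e.image ψ := by
    simpa [and_assoc] using hedge e he
  obtain ⟨f₀, -, ⟨f₁, hf₁, hf₁p, hrestr⟩, hf₀p, hf₀a⟩ := hrealized a ha
  set lift : {i // i ≠ ℓ} × α → ι × α := Prod.map Subtype.val id
  set Ψ : ℕ → ι × α := fun m => if m = x then (ℓ, p) else if m = y then (ℓ, f₁ ℓ) else lift (ψ m)
  have hxV : x ∉ D.sup id := by simpa [mem_sup] using hx
  have hyV : y ∉ D.sup id := by simpa [mem_sup] using hy
  have hΨV (m : ℕ) (hm : m ∈ D.sup id) : Ψ m = lift (ψ m) := by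
    simp [Ψ, ne_of_mem_of_not_mem hm hxV, ne_of_mem_of_not_mem hm hyV]
  have hΨV_fst (m : ℕ) (hm : m ∈ D.sup id) : (Ψ m).1 ≠ ℓ := by
    rw [hΨV m hm]; exact (ψ m).1.2
  have himage (e : Finset ℕ) (he : e ∈ D) : e.image Ψ = (e.image ψ).image lift := by
    rw [image_image]
    exact image_congr fun m hm => hΨV m (mem_sup.mpr ⟨e, he, hm⟩)
  refine ⟨Ψ, Set.InjOn.mono (sup_id_insert_image_insert_subset ha) ?_, ?_⟩
  · rw [coe_insert, coe_insert, Set.injOn_insert (by simp [hxy, hxV]),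
      Set.injOn_insert (by simpa using hyV)]
    refine ⟨⟨?_, ?_⟩, ?_⟩
    · have hlift_inj : Function.Injective lift :=
        Subtype.val_injective.prodMap Function.injective_id
      exact (hlift_inj.comp_injOn hψ).congr fun m hm => (hΨV m hm).symm
    · rintro ⟨m, hm, h⟩
      exact hΨV_fst m hm (by simp [h, Ψ, hxy.symm])
    · rintro ⟨m, rfl | hm, h⟩
      · exact hf₁p (by simpa [Ψ, hxy.symm, hf₀p] using h)
      · exact hΨV_fst m hm (by simp [h, Ψ])
  · intro e' he'
    rcases mem_insert.mp he' with rfl | he'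
    · refine mem_image.mpr ⟨f₁, hf₁, ?_⟩
      rw [graphFinset_eq_insert_image_restrictAway ℓ f₁, image_insert, himage a ha, hrestr, hf₀a]
      simp [Ψ, lift, hxy.symm]
    · obtain ⟨e, he, rfl⟩ := mem_image.mp he'
      obtain ⟨f, hf, -, hfp, hfe⟩ := hrealized e he
      refine mem_image.mpr ⟨f, hf, ?_⟩
      rw [graphFinset_eq_insert_image_restrictAway ℓ f, image_insert, himage e he, hfe, hfp]
      simp [Ψ, lift]

lemma card_le_of_not_embeds_insert_image_insert [Fintype α] {F : Finset (ι → α)} (ℓ : ι) {c : ℕ}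
    (ha : a ∈ D) (hx : ∀ e ∈ D, x ∉ e) (hy : ∀ e ∈ D, y ∉ e) (hxy : x ≠ y)
    (hbound : ∀ G : Finset ({i // i ≠ ℓ} → α), ¬ Embeds D G → G.card ≤ c)
    (hF : ¬ Embeds (insert (insert y a) (D.image (insert x ·))) F) :
    F.card ≤ c * Fintype.card α + Fintype.card α ^ (Fintype.card ι - 1) := by
  rw [← card_filter_add_card_filter_not (Shared F ℓ)]
  gcongr
  · refine card_univ (α := α) ▸ card_le_mul_card_image_of_maps_to (f := fun f => f ℓ)
      (fun _ _ => mem_univ _) c fun p _ => ?_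
    have hinj : Set.InjOn (restrictAway ℓ)
        ((F.filter (Shared F ℓ)).filter fun f => f ℓ = p : Set (ι → α)) :=
      (restrictAway_injOn_fiber ℓ p).mono fun f hf => (mem_filter.mp hf).2
    rw [← card_image_of_injOn hinj]
    exact hbound _ fun h => hF (h.insert_image_insert ha hx hy hxy)
  · have hinj : Set.InjOn (restrictAway ℓ) (F.filter fun f => ¬ Shared F ℓ f : Set (ι → α)) := by
      intro f hf g hg h
      simp only [mem_coe, mem_filter] at hf hg
      refine eq_of_apply_eq_of_restrictAway_eq (not_not.mp fun hne => hf.2 ?_) h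
      exact ⟨g, hg.1, Ne.symm hne, h.symm⟩
    calc _ = ((F.filter fun f => ¬ Shared F ℓ f).image (restrictAway ℓ)).card :=
          (card_image_of_injOn hinj).symm
      _ ≤ Fintype.card ({i // i ≠ ℓ} → α) := card_le_univ _
      _ = Fintype.card α ^ (Fintype.card ι - 1) := by
          simp [Fintype.card_subtype_compl]

end Embedding

lemma IsSpecialCluster.left_mem {k : ℕ} {D : Finset (Finset ℕ)} {a b : Finset ℕ}
    (h : IsSpecialCluster k D a b) : a ∈ D := by
  cases h <;> simp

lemma path_eq_insert_image_insert (w x y z : ℕ) :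
    ({{w, x}, {x, y}, {y, z}} : Finset (Finset ℕ))
      = insert (insert w {x}) (({{x}, {z}} : Finset (Finset ℕ)).image (insert y ·)) := by
  simp [Finset.pair_comm]

theorem IsSpecialCluster.card_le_of_not_embeds {α : Type*} [Fintype α] [DecidableEq α] {k : ℕ}
    {D : Finset (Finset ℕ)} {a b : Finset ℕ} (hD : IsSpecialCluster k D a b)
    {ι : Type*} [Fintype ι] [DecidableEq ι] (hι : Fintype.card ι = k) {F : Finset (ι → α)}
    (hF : ¬ Embeds D F) :
    F.card ≤ k * Fintype.card α ^ (k - 1) := by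
  induction hD generalizing ι with
  | base w x y z hwx hwy hwz hxy hxz hyz =>
    obtain ⟨ℓ⟩ : Nonempty ι := Fintype.card_pos_iff.mp (by omega)
    rw [path_eq_insert_image_insert] at hF
    have hcard := card_le_of_not_embeds_insert_image_insert ℓ (by simp) (by simp [hxy.symm, hyz])
      (by simp [hwx, hwz]) hwy.symm (fun G hG => card_le_one_of_not_embeds_pair
        (by simp [Fintype.card_subtype_compl, hι]) hxz hG) hF
    rw [hι] at hcard
    simpa [two_mul] using hcard
  | step k D a b x y hD hx hy hxy ih =>
    obtain ⟨ℓ⟩ : Nonempty ι := Fintype.card_pos_iff.mp (by omega)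
    have hcard := card_le_of_not_embeds_insert_image_insert ℓ hD.left_mem hx hy hxy
      (fun G hG => ih (by simp [Fintype.card_subtype_compl, hι]) hG) hF
    rw [hι] at hcard
    refine hcard.trans_eq ?_
    rcases k with _ | k
    · simp
    · simp only [add_tsub_cancel_right, pow_succ]
      ring

theorem stmt15_general (k : ℕ) (D : Finset (Finset ℕ)) (a b : Finset ℕ)
    (hD : IsSpecialCluster k D a b) (n : ℕ) (H : Finset (Finset (Fin k × Fin n)))
    (htrans : ∀ e ∈ H, ∀ i : Fin k, (e.filter fun v => v.1 = i).card = 1)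
    (hfree : ¬ ∃ ψ : ℕ → Fin k × Fin n, Set.InjOn ψ ↑(D.sup id) ∧
      ∀ e ∈ D, e.image ψ ∈ H) :
    H.card ≤ k * n ^ (k - 1) := by
  obtain ⟨F, rfl⟩ := exists_image_graphFinset_eq htrans
  rw [card_image_of_injective F graphFinset_injective]
  simpa using hD.card_le_of_not_embeds (Fintype.card_fin k) hfree

/-- Every `k`-partite `k`-uniform hypergraph with parts of size `n` (vertices
`Fin k × Fin n`, each edge a transversal) containing no copy of the special
`k`-cluster `D_k` has at most `k·n^(k-1)` edges. -/
theorem stmt15 (k : ℕ) (hk : 2 ≤ k) (D : Finset (Finset ℕ)) (a b : Finset ℕ)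
    (hD : IsSpecialCluster k D a b) (n : ℕ) (H : Finset (Finset (Fin k × Fin n)))
    (htrans : ∀ e ∈ H, ∀ i : Fin k, (e.filter fun v => v.1 = i).card = 1)
    (hfree : ¬ ∃ ψ : ℕ → Fin k × Fin n, Set.InjOn ψ ↑(D.sup id) ∧
      ∀ e ∈ D, e.image ψ ∈ H) :
    H.card ≤ k * n ^ (k - 1) :=
  stmt15_general k D a b hD n H htrans hfree
end

section
/- Fix k ≥ 2. The hypergraph J_k of copies of a special k-cluster D_k is c-sparse for c = 2^{2k^2−2k−1}: every set S of vertices of J_k spans fewer than 2^{2k^2−2k−1}·|S|^2 edges. -/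
/-! A copy `A ⊆ S` of `D_k` is determined by the images `s, t ∈ S` of the two edges `a, b`
covering `D_k` together with the remaining fewer than `k` edges, each a transversal set inside
`s ∪ t`. As `s ∪ t` meets each of the `k` parts in at most two vertices, it contains at most
`2^k` transversals, which leaves at most `k · (2^k)^(k-1) ≤ 2^(2k²-2k-1)` choices once `s, t`
are fixed. -/

open Finset

namespace IsSpecialCluster

variable {k : ℕ} {D : Finset (Finset ℕ)} {a b : Finset ℕ}

theorem two_le (hD : IsSpecialCluster k D a b) : 2 ≤ k := by
  induction hD <;> omega

theorem left_mem_s16 (hD : IsSpecialCluster k D a b) : a ∈ D := by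
  cases hD <;> simp

theorem right_mem (hD : IsSpecialCluster k D a b) : b ∈ D := by
  induction hD with
  | base => simp
  | step _ _ _ _ _ _ _ _ _ _ ih => exact mem_insert_of_mem (mem_image_of_mem _ ih)

theorem left_ne_right (hD : IsSpecialCluster k D a b) : a ≠ b := by
  cases hD with
  | base w x y z _ hwy hwz =>
    intro h
    have : w ∈ ({y, z} : Finset ℕ) := h ▸ by simp
    simp_all
  | step _ _ a b x y hD _ hy hxy =>
    intro h
    have : y ∈ insert x b := h ▸ mem_insert_self y a
    rcases mem_insert.1 this with h' | h'
    · exact hxy h'.symm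
    · exact hy b hD.right_mem h'

theorem subset_union (hD : IsSpecialCluster k D a b) : ∀ e ∈ D, e ⊆ a ∪ b := by
  induction hD with
  | base => simp [subset_iff]
  | step _ _ _ _ _ _ _ _ _ _ ih =>
    intro e he
    rcases mem_insert.1 he with rfl | he
    · exact subset_union_left
    · obtain ⟨e₀, he₀, rfl⟩ := mem_image.1 he
      grind [ih e₀ he₀]

theorem card_le (hD : IsSpecialCluster k D a b) : D.card ≤ k + 1 := by
  induction hD with
  | base => exact card_le_three
  | step _ _ _ _ _ _ _ _ _ _ ih =>
    exact (card_insert_le _ _).trans (Nat.succ_le_succ (card_image_le.trans ih))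

end IsSpecialCluster

section Counting

variable {ι β : Type*} [Fintype ι] [DecidableEq ι] [DecidableEq β]

theorem card_le_pow_of_card_filter_eq_one (f : β → ι) {W : Finset (Finset β)} {U : Finset β}
    {m : ℕ} (hW : ∀ u ∈ W, u ⊆ U ∧ ∀ i, (u.filter (f · = i)).card = 1)
    (hU : ∀ i, (U.filter (f · = i)).card ≤ m) : W.card ≤ m ^ Fintype.card ι := by
  have eq_biUnion_fibres (u : Finset β) : univ.biUnion (fun i => u.filter (f · = i)) = u :=
    biUnion_filter_eq_of_maps_to fun _ _ => mem_univ _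
  calc W.card ≤ (Fintype.piFinset fun i => (U.filter (f · = i)).powersetCard 1).card := by
        refine card_le_card_of_injOn (fun u i => u.filter (f · = i)) (fun u hu => ?_)
          (fun u _ u' _ h => ?_)
        · simpa [mem_powersetCard] using
            fun i => ⟨filter_subset_filter _ (hW u hu).1, (hW u hu).2 i⟩
        · rw [← eq_biUnion_fibres u, ← eq_biUnion_fibres u']
          exact congrArg (univ.biUnion ·) h
    _ ≤ ∏ _i : ι, m := by
        rw [Fintype.card_piFinset]
        gcongr with i
        rw [card_powersetCard, Nat.choose_one_right]
        exact hU i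
    _ = m ^ Fintype.card ι := by simp

theorem card_filter_subset_union_le_two_pow (f : β → ι) {S : Finset (Finset β)}
    (hS : ∀ e ∈ S, ∀ i, (e.filter (f · = i)).card = 1) {s t : Finset β} (hs : s ∈ S)
    (ht : t ∈ S) : (S.filter (· ⊆ s ∪ t)).card ≤ 2 ^ Fintype.card ι := by
  refine card_le_pow_of_card_filter_eq_one f (U := s ∪ t)
    (fun u hu => ⟨(mem_filter.1 hu).2, hS u (mem_filter.1 hu).1⟩) fun i => ?_
  rw [filter_union]
  exact (card_union_le _ _).trans (by rw [hS s hs i, hS t ht i])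

end Counting

theorem card_filter_card_lt_powerset_le {α : Type*} {W : Finset α} {r M : ℕ} (hM : 1 ≤ M)
    (hW : W.card ≤ M) : (W.powerset.filter (·.card < r)).card ≤ r * M ^ (r - 1) := by
  classical
  have hsub : W.powerset.filter (·.card < r) ⊆ (range r).biUnion (W.powersetCard ·) := by
    intro C hC
    simp only [mem_filter, mem_powerset] at hC
    exact mem_biUnion.2 ⟨C.card, mem_range.2 hC.2, mem_powersetCard.2 ⟨hC.1, rfl⟩⟩
  calc _ ≤ ∑ j ∈ range r, (W.powersetCard j).card := (card_le_card hsub).trans card_biUnion_le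
    _ ≤ ∑ _j ∈ range r, M ^ (r - 1) := by
        gcongr with j hj
        rw [card_powersetCard]
        calc W.card.choose j ≤ W.card ^ j := Nat.choose_le_pow _ _
          _ ≤ M ^ j := Nat.pow_le_pow_left hW j
          _ ≤ M ^ (r - 1) := Nat.pow_le_pow_right hM (by have := mem_range.1 hj; omega)
    _ = r * M ^ (r - 1) := by simp

theorem ncard_le_of_forall_eq_insert_insert {β : Type*} [DecidableEq β]
    {S : Finset (Finset β)} {𝒜 : Set (Finset (Finset β))} {r M : ℕ} (hM : 1 ≤ M)
    (hS : ∀ s ∈ S, ∀ t ∈ S, (S.filter (· ⊆ s ∪ t)).card ≤ M)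
    (h𝒜 : ∀ A ∈ 𝒜, ∃ s ∈ S, ∃ t ∈ S, ∃ C ⊆ S.filter (· ⊆ s ∪ t),
      C.card < r ∧ A = insert s (insert t C)) :
    𝒜.ncard ≤ r * M ^ (r - 1) * S.card ^ 2 := by
  let T := (S ×ˢ S).biUnion fun p => ((S.filter (· ⊆ p.1 ∪ p.2)).powerset.filter
    (·.card < r)).image fun C => insert p.1 (insert p.2 C)
  have h𝒜T : 𝒜 ⊆ T := by
    intro A hA
    obtain ⟨s, hs, t, ht, C, hC, hCr, rfl⟩ := h𝒜 A hA
    simp only [T, coe_biUnion, coe_product, Set.mem_iUnion, coe_image, Set.mem_image]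
    exact ⟨(s, t), ⟨hs, ht⟩, C, by simpa using ⟨hC, hCr⟩, rfl⟩
  calc 𝒜.ncard ≤ T.card := by simpa using Set.ncard_le_ncard h𝒜T
    _ ≤ ∑ _p ∈ S ×ˢ S, r * M ^ (r - 1) := by
        refine card_biUnion_le.trans (sum_le_sum fun p hp => card_image_le.trans ?_)
        obtain ⟨hs, ht⟩ := mem_product.1 hp
        exact card_filter_card_lt_powerset_le hM (hS _ hs _ ht)
    _ = r * M ^ (r - 1) * S.card ^ 2 := by simp [sq, mul_comm]

theorem IsSpecialCluster.exists_eq_insert_insert {k : ℕ} {D : Finset (Finset ℕ)}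
    {a b : Finset ℕ} (hD : IsSpecialCluster k D a b) {β : Type*} [DecidableEq β]
    {S : Finset (Finset β)} {ψ : ℕ → β} (hψ : Set.InjOn ψ ↑(D.sup id))
    (hS : D.image (fun e => e.image ψ) ⊆ S) :
    ∃ s ∈ S, ∃ t ∈ S, ∃ C ⊆ S.filter (· ⊆ s ∪ t),
      C.card < k ∧ D.image (fun e => e.image ψ) = insert s (insert t C) := by
  set A := D.image fun e => e.image ψ
  have hsA : a.image ψ ∈ A := mem_image_of_mem _ hD.left_mem_s16
  have htA : b.image ψ ∈ A := mem_image_of_mem _ hD.right_mem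
  have hsup {e} (he : e ∈ D) : (e : Set ℕ) ⊆ ↑(D.sup id) := coe_subset.2 (le_sup (f := id) he)
  have hst : a.image ψ ≠ b.image ψ := fun h => hD.left_ne_right <| coe_injective <|
    (hψ.image_eq_image_iff (hsup hD.left_mem_s16) (hsup hD.right_mem)).1 <| by
      simpa only [coe_image] using congrArg ((↑) : Finset β → Set β) h
  have hpair : {a.image ψ, b.image ψ} ⊆ A := insert_subset hsA (singleton_subset_iff.2 htA)
  refine ⟨_, hS hsA, _, hS htA, A \ {a.image ψ, b.image ψ}, fun u hu => ?_, ?_, ?_⟩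
  · obtain ⟨e, he, rfl⟩ := mem_image.1 (mem_sdiff.1 hu).1
    refine mem_filter.2 ⟨hS (mem_image_of_mem _ he), ?_⟩
    rw [← image_union]
    exact image_subset_image (hD.subset_union e he)
  · have hA : A.card ≤ k + 1 := card_image_le.trans hD.card_le
    rw [card_sdiff_of_subset hpair, card_pair hst]
    have := hD.two_le
    omega
  · calc A = {a.image ψ, b.image ψ} ∪ (A \ {a.image ψ, b.image ψ}) :=
          (union_sdiff_of_subset hpair).symm
      _ = _ := by rw [insert_union, ← insert_eq]

theorem mul_two_pow_pow_le {k : ℕ} (hk : 2 ≤ k) :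
    k * (2 ^ k) ^ (k - 1) ≤ 2 ^ (2 * k ^ 2 - 2 * k - 1) :=
  calc k * (2 ^ k) ^ (k - 1) ≤ 2 ^ (k - 1) * 2 ^ (k * (k - 1)) := by
        rw [← pow_mul]
        gcongr
        have := Nat.lt_two_pow_self (n := k - 1)
        omega
    _ = 2 ^ (k - 1 + k * (k - 1)) := by rw [pow_add]
    _ ≤ 2 ^ (2 * k ^ 2 - 2 * k - 1) := by
        gcongr
        · norm_num
        · have : 2 * k ≤ k * k := Nat.mul_le_mul_right k hk
          rw [sq, Nat.mul_sub_one]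
          omega

theorem stmt16_general (k : ℕ) (D : Finset (Finset ℕ)) (a b : Finset ℕ)
    (hD : IsSpecialCluster k D a b) (n : ℕ) (S : Finset (Finset (Fin k × Fin n)))
    (htrans : ∀ e ∈ S, ∀ i : Fin k, (e.filter fun v => v.1 = i).card = 1) :
    Set.ncard {A : Finset (Finset (Fin k × Fin n)) | A ⊆ S ∧
      ∃ ψ : ℕ → Fin k × Fin n, Set.InjOn ψ ↑(D.sup id) ∧
        A = D.image fun e => e.image ψ} ≤ 2 ^ (2 * k ^ 2 - 2 * k - 1) * S.card ^ 2 := by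
  refine (ncard_le_of_forall_eq_insert_insert (r := k) Nat.one_le_two_pow ?_ ?_).trans
    (Nat.mul_le_mul_right _ (mul_two_pow_pow_le hD.two_le))
  · intro s hs t ht
    simpa using card_filter_subset_union_le_two_pow Prod.fst htrans hs ht
  · rintro A ⟨hAS, ψ, hψ, rfl⟩
    exact hD.exists_eq_insert_insert hψ hAS

/-- `J_k` is `2^(2k²-2k-1)`-sparse: for every set `S` of vertices of `J_k`
(vertices are transversal edges of the complete `k`-partite `k`-uniform hypergraph),
the number of edges of `J_k` — i.e. copies of `D_k` — spanned by `S` is at most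
`2^(2k²-2k-1)·|S|²`. -/
theorem stmt16 (k : ℕ) (hk : 2 ≤ k) (D : Finset (Finset ℕ)) (a b : Finset ℕ)
    (hD : IsSpecialCluster k D a b) (n : ℕ) (S : Finset (Finset (Fin k × Fin n)))
    (htrans : ∀ e ∈ S, ∀ i : Fin k, (e.filter fun v => v.1 = i).card = 1) :
    Set.ncard {A : Finset (Finset (Fin k × Fin n)) | A ⊆ S ∧
      ∃ ψ : ℕ → Fin k × Fin n, Set.InjOn ψ ↑(D.sup id) ∧
        A = D.image fun e => e.image ψ} ≤ 2 ^ (2 * k ^ 2 - 2 * k - 1) * S.card ^ 2 :=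
  stmt16_general k D a b hD n S htrans
end

section
/- Let F be the family of 3-partite 3-uniform hypergraphs with four edges such that one edge is contained in the union of the other three. Then every 3-partite 3-uniform hypergraph with parts of size n containing no member of F has O(n) edges. -/
open Finset

/-- Every 3-partite 3-uniform hypergraph with parts of size `n` (edges as transversal
tuples) containing no four distinct edges `e₁, e₂, e₃, e₄` with `e₄ ⊆ e₁ ∪ e₂ ∪ e₃`
has `O(n)` edges. -/
theorem stmt18 :
    ∃ C : ℕ, ∀ (n : ℕ) (H : Finset (Fin 3 → Fin n)),
      (¬ ∃ e₁ e₂ e₃ e₄, e₁ ∈ H ∧ e₂ ∈ H ∧ e₃ ∈ H ∧ e₄ ∈ H ∧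
        e₁ ≠ e₂ ∧ e₁ ≠ e₃ ∧ e₁ ≠ e₄ ∧ e₂ ≠ e₃ ∧ e₂ ≠ e₄ ∧ e₃ ≠ e₄ ∧
        ∀ i, e₄ i = e₁ i ∨ e₄ i = e₂ i ∨ e₄ i = e₃ i) →
      H.card ≤ C * n := by
  refine ⟨9, fun n H hF => ?_⟩
  -- Key: every edge has a coordinate whose fiber in H has at most 3 edges.
  have key : ∀ e ∈ H, ∃ i : Fin 3, (H.filter (fun f => f i = e i)).card ≤ 3 := by
    intro e he
    by_contra hcon
    push_neg at hcon
    have h0 := hcon 0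
    have h1 := hcon 1
    have h2 := hcon 2
    have hne1 : ((H.filter (fun f => f 0 = e 0)) \ {e}).Nonempty := by
      rw [← card_pos]
      have := card_le_card_sdiff_add_card (s := H.filter (fun f => f 0 = e 0)) (t := ({e} : Finset _))
      have hc : ({e} : Finset (Fin 3 → Fin n)).card = 1 := card_singleton e
      linarith
    obtain ⟨e₁, he₁⟩ := hne1
    rw [mem_sdiff, mem_filter, mem_singleton] at he₁
    obtain ⟨⟨he₁H, he₁0⟩, he₁e⟩ := he₁
    have hne2 : ((H.filter (fun f => f 1 = e 1)) \ {e, e₁}).Nonempty := by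
      rw [← card_pos]
      have := card_le_card_sdiff_add_card (s := H.filter (fun f => f 1 = e 1)) (t := ({e, e₁} : Finset _))
      have hc : ({e, e₁} : Finset (Fin 3 → Fin n)).card ≤ 2 := (card_insert_le _ _).trans (by simp)
      linarith
    obtain ⟨e₂, he₂⟩ := hne2
    rw [mem_sdiff, mem_filter, mem_insert, mem_singleton] at he₂
    obtain ⟨⟨he₂H, he₂1⟩, he₂ne⟩ := he₂
    push_neg at he₂ne
    have hne3 : ((H.filter (fun f => f 2 = e 2)) \ {e, e₁, e₂}).Nonempty := by
      rw [← card_pos]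
      have := card_le_card_sdiff_add_card (s := H.filter (fun f => f 2 = e 2)) (t := ({e, e₁, e₂} : Finset _))
      have hc : ({e, e₁, e₂} : Finset (Fin 3 → Fin n)).card ≤ 3 :=
        (card_insert_le _ _).trans (Nat.succ_le_succ ((card_insert_le _ _).trans (by simp)))
      linarith
    obtain ⟨e₃, he₃⟩ := hne3
    rw [mem_sdiff, mem_filter, mem_insert, mem_insert, mem_singleton] at he₃
    obtain ⟨⟨he₃H, he₃2⟩, he₃ne⟩ := he₃
    push_neg at he₃ne
    exact hF ⟨e₁, e₂, e₃, e, he₁H, he₂H, he₃H, he,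
      fun h => he₂ne.2 h.symm, fun h => he₃ne.2.1 h.symm, he₁e,
      fun h => he₃ne.2.2 h.symm, he₂ne.1, he₃ne.1,
      by
        intro i
        fin_cases i
        · exact Or.inl he₁0.symm
        · exact Or.inr (Or.inl he₂1.symm)
        · exact Or.inr (Or.inr he₃2.symm)⟩
  -- Split H into three parts.
  set H0 := H.filter (fun e => (H.filter (fun f => f 0 = e 0)).card ≤ 3) with hH0
  set H1 := H.filter (fun e => (H.filter (fun f => f 1 = e 1)).card ≤ 3) with hH1
  set H2 := H.filter (fun e => (H.filter (fun f => f 2 = e 2)).card ≤ 3) with hH2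
  have hsub : H ⊆ H0 ∪ H1 ∪ H2 := by
    intro e he
    obtain ⟨i, hi⟩ := key e he
    fin_cases i
    · exact mem_union_left _ (mem_union_left _ (mem_filter.mpr ⟨he, hi⟩))
    · exact mem_union_left _ (mem_union_right _ (mem_filter.mpr ⟨he, hi⟩))
    · exact mem_union_right _ (mem_filter.mpr ⟨he, hi⟩)
  have hpart : ∀ (i : Fin 3) (Hi : Finset (Fin 3 → Fin n)),
      Hi = H.filter (fun e => (H.filter (fun f => f i = e i)).card ≤ 3) → Hi.card ≤ 3 * n := by
    intro i Hi hHi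
    have h1 : Hi.card ≤ 3 * (Hi.image (fun e => e i)).card := by
      apply card_le_mul_card_image
      intro a ha
      obtain ⟨e, heHi, hea⟩ := mem_image.mp ha
      have heH : e ∈ H ∧ (H.filter (fun f => f i = e i)).card ≤ 3 := by
        rw [hHi] at heHi; exact mem_filter.mp heHi
      calc (Hi.filter (fun f => f i = a)).card
          ≤ (H.filter (fun f => f i = e i)).card := by
            apply card_le_card
            intro f hf
            rw [mem_filter] at hf ⊢
            rw [hHi] at hf
            exact ⟨(mem_filter.mp hf.1).1, hf.2.trans hea.symm⟩
        _ ≤ 3 := heH.2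
    have h2 : (Hi.image (fun e => e i)).card ≤ n := by
      have := card_le_card (subset_univ (Hi.image (fun e => e i)))
      simpa using this
    exact h1.trans (Nat.mul_le_mul_left 3 h2)
  have c0 := hpart 0 H0 hH0
  have c1 := hpart 1 H1 hH1
  have c2 := hpart 2 H2 hH2
  have := card_le_card hsub
  have hu : (H0 ∪ H1 ∪ H2).card ≤ H0.card + H1.card + H2.card :=
    (card_union_le _ _).trans (by have := card_union_le H0 H1; linarith)
  linarith
end
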